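/- arXiv:1201.6559 — 11 statements merged into one kernel-verified Lean document; each statement's English description precedes it below -/
import Mathlib

section
/- Let p be an odd prime and q = (2^(p-1) - 1)/p the Fermat quotient of p to base 2. Then, in ZMod p, twice the sum of the inverses of the even integers i with 0 < i < p is congruent to -2q; equivalently, the sum of the inverses of the integers 1, 2, ..., (p-1)/2 is congruent to -2q modulo p. -/
/-!
Since `p ∣ C(p, k)` for `0 < k < p`, summing `C(p, k) / p` gives `(2 ^ p - 2) / p = 2q`. Modulo `p`,
`k · C(p, k) / p = C(p - 1, k - 1) ≡ (-1) ^ (k - 1)`, so `2q ≡ ∑ (-1) ^ (k - 1) / k = ∑ 1 / k - 2 S₀`,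
and `∑ 1 / k` vanishes as the sum of the inverses of all units of `𝔽_p`. Finally
`∑_{j ≤ (p - 1) / 2} 1 / j = 2 ∑_{j ≤ (p - 1) / 2} 1 / (2j) = 2 S₀`.
-/

open Finset

theorem ZMod.sum_univ_eq_sum_range {M : Type*} [AddCommMonoid M] (n : ℕ) [NeZero n]
    (f : ZMod n → M) : ∑ x : ZMod n, f x = ∑ k ∈ range n, f k := by
  symm
  exact sum_nbij' (fun k => (k : ZMod n)) ZMod.val (fun _ _ => mem_univ _)
    (fun x _ => mem_range.2 x.val_lt) (fun k hk => ZMod.val_natCast_of_lt (mem_range.1 hk))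
    (fun x _ => ZMod.natCast_zmod_val x) (fun _ _ => rfl)

theorem FiniteField.sum_inv_eq_zero {K : Type*} [Field K] [Fintype K] (hK : Fintype.card K ≠ 2) :
    ∑ x : K, x⁻¹ = 0 := by
  have hcard : 1 < Fintype.card K - 1 := by
    have := Fintype.one_lt_card (α := K); omega
  rw [Fintype.sum_bijective _ inv_involutive.bijective _ (fun x => x) (fun _ => rfl)]
  simpa using FiniteField.sum_pow_lt_card_sub_one K 1 hcard

theorem ZMod.sum_inv_Ioo_eq_zero {p : ℕ} [Fact p.Prime] (hp2 : p ≠ 2) :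
    ∑ k ∈ Ioo 0 p, (k : ZMod p)⁻¹ = 0 := by
  have hp := (Fact.out : p.Prime).pos
  rw [← FiniteField.sum_inv_eq_zero (by rwa [ZMod.card]), ZMod.sum_univ_eq_sum_range,
    range_eq_Ico, ← Ioo_insert_left hp, sum_insert (by simp)]
  simp

theorem Nat.Prime.cast_choose_sub_one {R : Type*} [Ring R] {p : ℕ} [CharP R p] (hp : p.Prime)
    {k : ℕ} (hk : k < p) : ((p - 1).choose k : R) = (-1) ^ k := by
  induction k with
  | zero => simp
  | succ k ih =>
    have hpascal : p.choose (k + 1) = (p - 1).choose k + (p - 1).choose (k + 1) := by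
      obtain ⟨n, rfl⟩ : ∃ n, p = n + 1 := ⟨p - 1, by omega⟩
      exact Nat.choose_succ_succ n k
    have hzero : (p.choose (k + 1) : R) = 0 :=
      (CharP.cast_eq_zero_iff R p _).2 (hp.dvd_choose_self k.succ_ne_zero hk)
    rw [hpascal, Nat.cast_add, ih (by omega)] at hzero
    rw [pow_succ, mul_neg_one]
    exact eq_neg_of_add_eq_zero_right hzero

theorem Nat.Prime.cast_choose_div_self {K : Type*} [Field K] {p : ℕ} [CharP K p] (hp : p.Prime)
    {k : ℕ} (hk0 : 0 < k) (hkp : k < p) : ((p.choose k / p : ℕ) : K) = -(-1) ^ k / k := by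
  have hk : (k : K) ≠ 0 := by
    rw [Ne, CharP.cast_eq_zero_iff K p]
    exact fun h => (Nat.le_of_dvd hk0 h).not_gt hkp
  have hmul : k * (p.choose k / p) = (p - 1).choose (k - 1) := by
    have h := Nat.add_one_mul_choose_eq (p - 1) (k - 1)
    rw [Nat.sub_add_cancel hp.one_le, Nat.sub_add_cancel hk0] at h
    rw [← Nat.mul_div_assoc _ (hp.dvd_choose_self hk0.ne' hkp), mul_comm, ← h,
      Nat.mul_div_cancel_left _ hp.pos]
  rw [eq_div_iff hk, mul_comm, ← Nat.cast_mul, hmul, hp.cast_choose_sub_one (by omega)]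
  obtain ⟨j, rfl⟩ : ∃ j, k = j + 1 := ⟨k - 1, by omega⟩
  simp [pow_succ]

theorem Nat.Prime.two_mul_fermatQuotient_two_eq_sum {p : ℕ} (hp : p.Prime) (hp2 : p ≠ 2) :
    2 * ((2 ^ (p - 1) - 1) / p) = ∑ k ∈ Ioo 0 p, p.choose k / p := by
  have hdvd : p ∣ 2 ^ (p - 1) - 1 := Nat.dvd_of_mod_eq_zero
    (Nat.pow_card_sub_one_sub_one_mod_card hp ((Nat.coprime_primes prime_two hp).2 hp2.symm))
  have hbinom : ∑ k ∈ Ioo 0 p, p.choose k + 2 = 2 ^ p := by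
    rw [← Nat.sum_range_choose, sum_range_succ, range_eq_Ico, ← Ioo_insert_left hp.pos,
      sum_insert (by simp)]
    rw [Nat.choose_zero_right, Nat.choose_self]; ring
  have hpow : 2 * 2 ^ (p - 1) = 2 ^ p := mul_pow_sub_one hp.ne_zero 2
  apply Nat.eq_of_mul_eq_mul_left hp.pos
  calc p * (2 * ((2 ^ (p - 1) - 1) / p)) = 2 * (2 ^ (p - 1) - 1) := by
        rw [mul_left_comm, Nat.mul_div_cancel' hdvd]
    _ = ∑ k ∈ Ioo 0 p, p.choose k := by have := Nat.one_le_two_pow (n := p - 1); omega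
    _ = p * ∑ k ∈ Ioo 0 p, p.choose k / p := by
        rw [mul_sum]
        refine sum_congr rfl fun k hk => ?_
        rw [mem_Ioo] at hk
        exact (Nat.mul_div_cancel' (hp.dvd_choose_self hk.1.ne' hk.2)).symm

theorem sum_neg_one_pow_mul_eq {R : Type*} [Ring R] (s : Finset ℕ) (f : ℕ → R) :
    ∑ k ∈ s, (-1) ^ k * f k = 2 * ∑ k ∈ s with Even k, f k - ∑ k ∈ s, f k := by
  have heven : ∑ k ∈ s with Even k, (-1) ^ k * f k = ∑ k ∈ s with Even k, f k :=
    sum_congr rfl fun k hk => by rw [(mem_filter.1 hk).2.neg_one_pow, one_mul]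
  have hodd : ∑ k ∈ s with ¬Even k, (-1) ^ k * f k = -∑ k ∈ s with ¬Even k, f k := by
    rw [← sum_neg_distrib]
    refine sum_congr rfl fun k hk => ?_
    rw [(Nat.not_even_iff_odd.1 (mem_filter.1 hk).2).neg_one_pow, neg_one_mul]
  rw [two_mul, ← sum_filter_add_sum_filter_not s Even, heven, hodd,
    ← sum_filter_add_sum_filter_not s Even f]
  abel

theorem sum_inv_Icc_eq_two_mul_sum_inv_even {K : Type*} [Field K] (h2 : (2 : K) ≠ 0) (n : ℕ) :
    ∑ j ∈ Icc 1 n, (j : K)⁻¹ = 2 * ∑ i ∈ Ioo 0 (2 * n + 1) with Even i, (i : K)⁻¹ := by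
  have hevens : {i ∈ Ioo 0 (2 * n + 1) | Even i} = (Icc 1 n).image (2 * ·) := by
    ext i
    simp only [mem_filter, mem_Ioo, mem_image, mem_Icc, even_iff_two_dvd]
    constructor
    · rintro ⟨hi, j, rfl⟩
      exact ⟨j, by omega, rfl⟩
    · rintro ⟨j, hj, rfl⟩
      exact ⟨by omega, dvd_mul_right 2 j⟩
  rw [hevens, sum_image fun _ _ _ _ h => by simpa using h, mul_sum]
  refine sum_congr rfl fun j _ => ?_
  rw [Nat.cast_mul, Nat.cast_two, mul_inv, ← mul_assoc, mul_inv_cancel₀ h2, one_mul]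

theorem sylvester_congruence (p : ℕ) (hp : p.Prime) (hp2 : 2 < p) :
    (2 * ∑ i ∈ (Finset.Ioo 0 p).filter (fun i => Even i), ((i : ZMod p))⁻¹
        = -(2 * (((2 ^ (p - 1) - 1) / p : ℕ) : ZMod p))) ∧
    (∑ i ∈ Finset.Icc 1 ((p - 1) / 2), ((i : ZMod p))⁻¹
        = -(2 * (((2 ^ (p - 1) - 1) / p : ℕ) : ZMod p))) := by
  have := Fact.mk hp
  have h2 : (2 : ZMod p) ≠ 0 := Ring.two_ne_zero (by rw [ZMod.ringChar_zmod_n]; omega)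
  have heven : 2 * ∑ i ∈ Ioo 0 p with Even i, (i : ZMod p)⁻¹
      = -(2 * (((2 ^ (p - 1) - 1) / p : ℕ) : ZMod p)) := by
    have h := congrArg (Nat.cast : ℕ → ZMod p) (hp.two_mul_fermatQuotient_two_eq_sum hp2.ne')
    rw [Nat.cast_mul, Nat.cast_two, Nat.cast_sum, sum_congr rfl fun k hk =>
      hp.cast_choose_div_self (mem_Ioo.1 hk).1 (mem_Ioo.1 hk).2] at h
    simp only [div_eq_mul_inv, neg_mul, sum_neg_distrib, sum_neg_one_pow_mul_eq,
      ZMod.sum_inv_Ioo_eq_zero hp2.ne', sub_zero] at h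
    rw [h, neg_neg]
  refine ⟨heven, ?_⟩
  obtain ⟨n, hn⟩ := hp.odd_of_ne_two hp2.ne'
  rw [show (p - 1) / 2 = n by omega, sum_inv_Icc_eq_two_mul_sum_inv_even h2, ← hn, heven]
end

section
/- Let p be a prime with p > 3. Then the sum over i = 1, ..., p-1 of the multiplicative inverse of i in ZMod p^2 is equal to 0 in ZMod p^2 (Wolstenholme's theorem: S ≡ 0 mod p^2). -/
open Finset

lemma sum_sq_zmod (p : ℕ) [NeZero p] (hp : p.Prime) (hp3 : 3 < p) :
    ∑ x : ZMod p, x ^ 2 = 0 := by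
  haveI : Fact p.Prime := ⟨hp⟩
  have h3 : (3 : ZMod p) ≠ 0 := by
    intro h
    rw [show (3 : ZMod p) = ((3 : ℕ) : ZMod p) by norm_cast,
      ZMod.natCast_eq_zero_iff] at h
    have := Nat.le_of_dvd (by norm_num) h; omega
  have h2 : (2 : ZMod p) ≠ 0 := by
    intro h
    rw [show (2 : ZMod p) = ((2 : ℕ) : ZMod p) by norm_cast,
      ZMod.natCast_eq_zero_iff] at h
    have := Nat.le_of_dvd (by norm_num) h; omega
  have key : ∑ x : ZMod p, (2 * x) ^ 2 = ∑ x : ZMod p, x ^ 2 :=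
    Fintype.sum_bijective (fun x => 2 * x) (mulLeft_bijective₀ 2 h2)
      (fun x => (2 * x) ^ 2) (fun y => y ^ 2) (fun x => rfl)
  have h4 : ∑ x : ZMod p, (2 * x) ^ 2 = 4 * ∑ x : ZMod p, x ^ 2 := by
    rw [Finset.mul_sum]; exact Finset.sum_congr rfl (fun x _ => by ring)
  have h30 : (3 : ZMod p) * ∑ x : ZMod p, x ^ 2 = 0 := by
    rw [h4] at key; linear_combination key
  exact (mul_eq_zero.mp h30).resolve_left h3

theorem wolstenholme_theorem (p : ℕ) (hp : p.Prime) (hp3 : 3 < p) :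
    ∑ i ∈ Finset.Ioo 0 p, ((i : ZMod (p ^ 2)))⁻¹ = 0 := by
  haveI : Fact p.Prime := ⟨hp⟩
  have hp0 : 0 < p := by omega
  have hpd : p ∣ p ^ 2 := dvd_pow_self p two_ne_zero
  haveI : NeZero (p ^ 2) := ⟨pow_ne_zero 2 hp.ne_zero⟩
  have hcop : ∀ i ∈ Ioo 0 p, Nat.Coprime i (p ^ 2) := by
    intro i hi
    simp only [mem_Ioo] at hi
    have hnd : ¬ p ∣ i := fun h => by have := Nat.le_of_dvd hi.1 h; omega
    exact Nat.Coprime.pow_right 2 ((hp.coprime_iff_not_dvd.mpr hnd).symm)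
  have hinv : ∀ i ∈ Ioo 0 p, (i : ZMod (p ^ 2)) * (i : ZMod (p ^ 2))⁻¹ = 1 := fun i hi =>
    ZMod.mul_inv_of_unit _ ((ZMod.isUnit_iff_coprime i (p ^ 2)).mpr (hcop i hi))
  set S := ∑ i ∈ Ioo 0 p, ((i : ZMod (p ^ 2)))⁻¹ with hS
  set T := ∑ i ∈ Ioo 0 p, ((i : ZMod (p ^ 2)))⁻¹ * (((p - i : ℕ) : ZMod (p ^ 2)))⁻¹ with hT
  have hre : S = ∑ i ∈ Ioo 0 p, (((p - i : ℕ) : ZMod (p ^ 2)))⁻¹ := by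
    rw [hS]
    refine Finset.sum_nbij' (fun i => p - i) (fun i => p - i) ?_ ?_ ?_ ?_ ?_
    · intro a ha; simp only [mem_Ioo] at *; omega
    · intro a ha; simp only [mem_Ioo] at *; omega
    · intro a ha; simp only [mem_Ioo] at ha; show p - (p - a) = a; omega
    · intro a ha; simp only [mem_Ioo] at ha; show p - (p - a) = a; omega
    · intro a ha; simp only [mem_Ioo] at ha; rw [Nat.sub_sub_self ha.2.le]
  have h2S : (2 : ZMod (p ^ 2)) * S = (p : ZMod (p ^ 2)) * T := by
    have e1 : ∑ i ∈ Ioo 0 p,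
        ((i : ZMod (p ^ 2))⁻¹ + (((p - i : ℕ) : ZMod (p ^ 2)))⁻¹)
        = (p : ZMod (p ^ 2)) * T := by
      rw [hT, Finset.mul_sum]
      refine Finset.sum_congr rfl (fun i hi => ?_)
      have hmem : p - i ∈ Ioo 0 p := by simp only [mem_Ioo] at *; omega
      have ha := hinv i hi
      have hb := hinv (p - i) hmem
      have hsum : (i : ZMod (p ^ 2)) + ((p - i : ℕ) : ZMod (p ^ 2)) = (p : ZMod (p ^ 2)) := by
        simp only [mem_Ioo] at hi
        rw [Nat.cast_sub hi.2.le]; ring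
      linear_combination (-(((p - i : ℕ) : ZMod (p ^ 2)))⁻¹) * ha
        + (-((i : ZMod (p ^ 2)))⁻¹) * hb
        + (((i : ZMod (p ^ 2)))⁻¹ * (((p - i : ℕ) : ZMod (p ^ 2)))⁻¹) * hsum
    rw [← e1, Finset.sum_add_distrib, ← hS, ← hre]; ring
  have hcast : (ZMod.castHom hpd (ZMod p)) T = 0 := by
    rw [hT, map_sum]
    have hterm : ∀ i ∈ Ioo 0 p,
        (ZMod.castHom hpd (ZMod p)) ((i : ZMod (p ^ 2))⁻¹ * (((p - i : ℕ) : ZMod (p ^ 2)))⁻¹)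
        = -(((i : ZMod p))⁻¹) ^ 2 := by
      intro i hi
      have hmem : p - i ∈ Ioo 0 p := by simp only [mem_Ioo] at *; omega
      have hci : (ZMod.castHom hpd (ZMod p)) ((i : ZMod (p ^ 2))⁻¹) = ((i : ZMod p))⁻¹ := by
        have h1 := congrArg (ZMod.castHom hpd (ZMod p)) (hinv i hi)
        rw [map_mul, map_one, map_natCast] at h1
        exact eq_inv_of_mul_eq_one_right h1
      have hcj : (ZMod.castHom hpd (ZMod p)) (((p - i : ℕ) : ZMod (p ^ 2))⁻¹)
          = (((p - i : ℕ) : ZMod p))⁻¹ := by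
        have h1 := congrArg (ZMod.castHom hpd (ZMod p)) (hinv (p - i) hmem)
        rw [map_mul, map_one, map_natCast] at h1
        exact eq_inv_of_mul_eq_one_right h1
      have hneg : (((p - i : ℕ) : ZMod p)) = -(i : ZMod p) := by
        simp only [mem_Ioo] at hi
        rw [Nat.cast_sub hi.2.le, ZMod.natCast_self]; ring
      rw [map_mul, hci, hcj, hneg, inv_neg]; ring
    rw [Finset.sum_congr rfl hterm, Finset.sum_neg_distrib, neg_eq_zero]
    have hext : ∑ i ∈ Ioo 0 p, (((i : ZMod p))⁻¹) ^ 2 = ∑ x : ZMod p, (x⁻¹) ^ 2 := by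
      have h0 : ∑ i ∈ Ico 0 p, (((i : ZMod p))⁻¹) ^ 2
          = ∑ i ∈ Ioo 0 p, (((i : ZMod p))⁻¹) ^ 2 := by
        rw [← Finset.Ioo_insert_left hp0, Finset.sum_insert (by simp)]
        simp
      rw [← h0, ← Finset.range_eq_Ico]
      refine Finset.sum_nbij' (fun i => (i : ZMod p)) (fun x => x.val) ?_ ?_ ?_ ?_ ?_
      · intro a _; exact mem_univ _
      · intro x _; exact mem_range.mpr (ZMod.val_lt x)
      · intro a ha; exact ZMod.val_cast_of_lt (mem_range.mp ha)
      · intro x _; exact ZMod.natCast_rightInverse x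
      · intro a _; rfl
    rw [hext]
    rw [Fintype.sum_bijective (fun x : ZMod p => x⁻¹) inv_involutive.bijective
      (fun x => (x⁻¹) ^ 2) (fun x => x ^ 2) (fun x => rfl)]
    exact sum_sq_zmod p hp hp3
  have hpT : (p : ZMod (p ^ 2)) * T = 0 := by
    have hv : (p : ℕ) ∣ T.val := by
      rwa [ZMod.castHom_apply, ← ZMod.natCast_val, ZMod.natCast_eq_zero_iff] at hcast
    obtain ⟨k, hk⟩ := hv
    calc (p : ZMod (p ^ 2)) * T = (p : ZMod (p ^ 2)) * (T.val : ZMod (p ^ 2)) := by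
          rw [ZMod.natCast_val, ZMod.cast_id]
      _ = ((p * T.val : ℕ) : ZMod (p ^ 2)) := by push_cast; ring
      _ = 0 := by
          rw [hk, ← mul_assoc, ← pow_two, Nat.cast_mul, ZMod.natCast_self, zero_mul]
  have h2u : IsUnit (2 : ZMod (p ^ 2)) := by
    have hc : Nat.Coprime 2 (p ^ 2) := Nat.Coprime.pow_right 2
      ((Nat.coprime_primes Nat.prime_two hp).mpr (by omega))
    simpa using (ZMod.isUnit_iff_coprime 2 (p ^ 2)).mpr hc
  exact (h2u.mul_right_eq_zero).mp (h2S.trans hpT)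
end

section
/- Let p be a prime with p > 3. Then the binomial coefficient C(2p-1, p-1) is congruent to 1 modulo p^3 (Wolstenholme's congruence). -/
/-!
By Vandermonde, `C(2p, p) = ∑ₖ C(p, k)²`, and `C(2p, p) = 2 C(2p-1, p-1)`, so it suffices that
`p³ ∣ ∑_{0<k<p} C(p, k)²`. For `0 < k < p` write `C(p, k) = p aₖ`; from `k C(p, k) = p C(p-1, k-1)`
and `C(p-1, k-1) ≡ (-1)^(k-1) (mod p)` we get `aₖ² ≡ k⁻² (mod p)`. Hence the sum is `p²` times a
number congruent to `∑_{x ∈ 𝔽ₚ} x⁻² = ∑_{x ∈ 𝔽ₚ} x² = 0`, the last step needing `p - 1 > 2`.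
-/

open Finset

theorem ZMod.sum_range_natCast {M : Type*} [AddCommMonoid M] (n : ℕ) [NeZero n]
    (f : ZMod n → M) : ∑ k ∈ range n, f k = ∑ x : ZMod n, f x :=
  sum_bij' (fun k _ => (k : ZMod n)) (fun x _ => x.val) (by simp) (fun x _ => mem_range.2 x.val_lt)
    (fun k hk => ZMod.val_cast_of_lt (mem_range.1 hk)) (fun x _ => ZMod.natCast_zmod_val x)
    (fun _ _ => rfl)

theorem FiniteField.sum_inv_sq_eq_zero {K : Type*} [Field K] [Fintype K]
    (hK : 3 < Fintype.card K) : ∑ x : K, x⁻¹ ^ 2 = 0 := by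
  rw [Fintype.sum_equiv (Equiv.inv K) (fun x => x⁻¹ ^ 2) (· ^ 2) fun _ => rfl]
  exact FiniteField.sum_pow_lt_card_sub_one (K := K) 2 (by omega)

namespace Nat

theorem Prime.cast_choose_pred_eq_neg_one_pow {p k : ℕ} (hp : p.Prime) (hk : k < p) :
    ((p - 1).choose k : ZMod p) = (-1) ^ k := by
  induction k with
  | zero => simp
  | succ k ih =>
    have hpascal : p.choose (k + 1) = (p - 1).choose k + (p - 1).choose (k + 1) := by
      rw [← choose_succ_succ', Nat.sub_add_cancel hp.one_lt.le]
    have hdvd : ((p.choose (k + 1) : ℕ) : ZMod p) = 0 :=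
      (ZMod.natCast_eq_zero_iff _ _).2 (hp.dvd_choose_self k.succ_ne_zero hk)
    rw [hpascal, cast_add, ih (by omega)] at hdvd
    linear_combination hdvd

theorem Prime.cast_choose_div_mul_eq_neg_one_pow {p k : ℕ} (hp : p.Prime) (hk : k + 1 < p) :
    ((p.choose (k + 1) / p : ℕ) : ZMod p) * (k + 1) = (-1) ^ k := by
  have hmul : p * (p.choose (k + 1) / p) = p.choose (k + 1) :=
    Nat.mul_div_cancel' (hp.dvd_choose_self k.succ_ne_zero (by omega))
  have hpred : (p - 1).choose k = p.choose (k + 1) / p * (k + 1) := by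
    apply Nat.eq_of_mul_eq_mul_left hp.pos
    have := add_one_mul_choose_eq (p - 1) k
    rw [Nat.sub_add_cancel hp.one_lt.le] at this
    rw [this, ← mul_assoc, hmul]
  rw [← hp.cast_choose_pred_eq_neg_one_pow (by omega : k < p), hpred]
  push_cast
  ring

theorem Prime.pow_three_dvd_sum_choose_sq {p : ℕ} (hp : p.Prime) (hp3 : 3 < p) :
    p ^ 3 ∣ ∑ k ∈ range (p - 1), p.choose (k + 1) ^ 2 := by
  have := Fact.mk hp
  set a : ℕ → ℕ := fun k => p.choose (k + 1) / p
  have hsum : ∑ k ∈ range (p - 1), p.choose (k + 1) ^ 2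
      = p ^ 2 * ∑ k ∈ range (p - 1), a k ^ 2 := by
    rw [mul_sum]
    refine sum_congr rfl fun k hk => ?_
    rw [← mul_pow, Nat.mul_div_cancel' (hp.dvd_choose_self k.succ_ne_zero (by simp at hk; omega))]
  have ha : ∀ k ∈ range (p - 1), (a k : ZMod p) ^ 2 = ((k + 1 : ZMod p)⁻¹) ^ 2 := by
    intro k hk
    have hsq : (a k : ZMod p) ^ 2 * (k + 1) ^ 2 = 1 := by
      rw [← mul_pow, hp.cast_choose_div_mul_eq_neg_one_pow (by simp at hk; omega), ← pow_mul,
        mul_comm, pow_mul, neg_one_sq, one_pow]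
    rw [inv_pow]
    exact eq_inv_of_mul_eq_one_left hsq
  have hzero : ((∑ k ∈ range (p - 1), a k ^ 2 : ℕ) : ZMod p) = 0 := by
    push_cast
    rw [sum_congr rfl ha]
    have := sum_range_succ' (fun k : ℕ => ((k : ZMod p)⁻¹) ^ 2) (p - 1)
    rw [Nat.sub_add_cancel hp.one_lt.le, ZMod.sum_range_natCast p (fun x => x⁻¹ ^ 2),
      FiniteField.sum_inv_sq_eq_zero (by rwa [ZMod.card])] at this
    simpa using this.symm
  rw [hsum, pow_succ]
  exact Nat.mul_dvd_mul_left _ ((ZMod.natCast_eq_zero_iff _ _).1 hzero)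

theorem two_mul_choose_pred {n : ℕ} (hn : 0 < n) :
    (2 * n).choose n = 2 * (2 * n - 1).choose (n - 1) := by
  obtain ⟨m, rfl⟩ : ∃ m, n = m + 1 := ⟨n - 1, by omega⟩
  rw [show 2 * (m + 1) = 2 * m + 1 + 1 by ring, choose_succ_succ', choose_symm_half]
  simp only [add_tsub_cancel_right, show 2 * m + 1 + 1 - 1 = 2 * m + 1 by omega]
  ring

theorem Prime.choose_two_mul_modEq_two {p : ℕ} (hp : p.Prime) (hp3 : 3 < p) :
    (2 * p).choose p ≡ 2 [MOD p ^ 3] := by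
  obtain ⟨n, rfl⟩ : ∃ n, p = n + 1 := ⟨p - 1, by omega⟩
  rw [← sum_range_choose_sq, sum_range_succ, sum_range_succ', choose_self, choose_zero_right,
    one_pow]
  have hdvd := hp.pow_three_dvd_sum_choose_sq hp3
  rw [add_tsub_cancel_right] at hdvd
  exact ((Nat.modEq_zero_iff_dvd.2 hdvd).add_right 1).add_right 1

end Nat

theorem wolstenholme_congruence (p : ℕ) (hp : p.Prime) (hp3 : 3 < p) :
    (2 * p - 1).choose (p - 1) ≡ 1 [MOD p ^ 3] := by
  have hodd : Nat.Coprime (p ^ 3) 2 :=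
    Nat.Coprime.pow_left 3 ((Nat.coprime_primes hp Nat.prime_two).2 (by omega))
  refine Nat.ModEq.cancel_left_of_coprime hodd ?_
  rw [← Nat.two_mul_choose_pred hp.pos, mul_one]
  exact hp.choose_two_mul_modEq_two hp3
end

section
/- Let p be an odd prime. Then in ZMod p, S_00 = S_11, where S_00 is the sum of 1/(ij) over pairs 0 < i < j < p with both i and j even, and S_11 is the sum of 1/(ij) over pairs 0 < i < j < p with both i and j odd. -/
theorem S00_eq_S11 (p : ℕ) (hp : p.Prime) (hodd : Odd p) :
    (∑ i ∈ (Finset.Ioo 0 p).filter (fun i => Even i),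
        ∑ j ∈ (Finset.Ioo i p).filter (fun j => Even j),
          ((i : ZMod p) * (j : ZMod p))⁻¹)
      = (∑ i ∈ (Finset.Ioo 0 p).filter (fun i => Odd i),
          ∑ j ∈ (Finset.Ioo i p).filter (fun j => Odd j),
            ((i : ZMod p) * (j : ZMod p))⁻¹) := by
  rw [Finset.sum_sigma', Finset.sum_sigma']
  refine Finset.sum_nbij' (fun x => ⟨p - x.2, p - x.1⟩) (fun x => ⟨p - x.2, p - x.1⟩)
    ?_ ?_ ?_ ?_ ?_
  · rintro ⟨i, j⟩ hx
    simp only [Finset.mem_sigma, Finset.mem_filter, Finset.mem_Ioo] at hx ⊢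
    obtain ⟨⟨⟨hi0, hip⟩, hie⟩, ⟨⟨hij, hjp⟩, hje⟩⟩ := hx
    refine ⟨⟨⟨?_, ?_⟩, ?_⟩, ⟨⟨?_, ?_⟩, ?_⟩⟩
    · omega
    · omega
    · exact Nat.Odd.sub_even hjp.le hodd hje
    · omega
    · omega
    · exact Nat.Odd.sub_even hip.le hodd hie
  · rintro ⟨i, j⟩ hx
    simp only [Finset.mem_sigma, Finset.mem_filter, Finset.mem_Ioo] at hx ⊢
    obtain ⟨⟨⟨hi0, hip⟩, hie⟩, ⟨⟨hij, hjp⟩, hje⟩⟩ := hx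
    refine ⟨⟨⟨?_, ?_⟩, ?_⟩, ⟨⟨?_, ?_⟩, ?_⟩⟩
    · omega
    · omega
    · exact Nat.Odd.sub_odd hodd hje
    · omega
    · omega
    · exact Nat.Odd.sub_odd hodd hie
  · rintro ⟨i, j⟩ hx
    simp only [Finset.mem_sigma, Finset.mem_filter, Finset.mem_Ioo] at hx
    obtain ⟨⟨⟨hi0, hip⟩, hie⟩, ⟨⟨hij, hjp⟩, hje⟩⟩ := hx
    simp only [Sigma.mk.inj_iff, heq_eq_eq]
    omega
  · rintro ⟨i, j⟩ hx
    simp only [Finset.mem_sigma, Finset.mem_filter, Finset.mem_Ioo] at hx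
    obtain ⟨⟨⟨hi0, hip⟩, hie⟩, ⟨⟨hij, hjp⟩, hje⟩⟩ := hx
    simp only [Sigma.mk.inj_iff, heq_eq_eq]
    omega
  · rintro ⟨i, j⟩ hx
    simp only [Finset.mem_sigma, Finset.mem_filter, Finset.mem_Ioo] at hx
    obtain ⟨⟨⟨hi0, hip⟩, hie⟩, ⟨⟨hij, hjp⟩, hje⟩⟩ := hx
    have h1 : ((p - j : ℕ) : ZMod p) = -(j : ZMod p) := by
      rw [Nat.cast_sub hjp.le, ZMod.natCast_self, zero_sub]
    have h2 : ((p - i : ℕ) : ZMod p) = -(i : ZMod p) := by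
      rw [Nat.cast_sub hip.le, ZMod.natCast_self, zero_sub]
    simp only [h1, h2, neg_mul_neg]
    ring_nf
end

section
/- Let p be an odd prime. Then in ZMod p, 2·S_00 = -S_01, where S_00 is the sum of 1/(ij) over pairs 0 < i < j < p with both i and j even, and S_01 is the sum of 1/(ij) over pairs 0 < i < j < p with i even and j odd. -/
lemma cast_ne_zero_of_lt' {p i : ℕ} (hp : p.Prime) (h0 : 0 < i) (h1 : i < 2*p) (h2 : i ≠ p) :
    (i : ZMod p) ≠ 0 := by
  haveI : Fact p.Prime := ⟨hp⟩
  rw [Ne, ZMod.natCast_eq_zero_iff]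
  rintro ⟨k, rfl⟩
  have hp1 := hp.one_lt
  match k with
  | 0 => omega
  | 1 => omega
  | (n+2) => nlinarith

lemma cast_sub_eq_neg_aux {p j : ℕ} (hj : j ≤ p) : ((p - j : ℕ) : ZMod p) = -(j : ZMod p) := by
  have : ((p - j : ℕ) : ZMod p) = (p : ZMod p) - (j : ZMod p) := by
    push_cast [Nat.cast_sub hj]; ring
  rw [this, ZMod.natCast_self, zero_sub]

lemma cast_sub_eq_neg_aux' {p j : ℕ} (hj : j ≤ 2*p) :
    ((2*p - j : ℕ) : ZMod p) = -(j : ZMod p) := by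
  have : ((2*p - j : ℕ) : ZMod p) = ((2*p : ℕ) : ZMod p) - (j : ZMod p) := by
    push_cast [Nat.cast_sub hj]; ring
  rw [this]; push_cast [ZMod.natCast_self]; ring

lemma sum_univ_eq_sum_range_aux {p : ℕ} [NeZero p] (f : ZMod p → ZMod p) :
    ∑ x : ZMod p, f x = ∑ i ∈ Finset.range p, f (i : ℕ) := by
  refine Finset.sum_nbij' (i := fun x : ZMod p => x.val) (j := fun i : ℕ => (i : ZMod p))
    ?_ ?_ ?_ ?_ ?_
  · intro a _; simpa using ZMod.val_lt a
  · intro a _; exact Finset.mem_univ _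
  · intro a _; simp [ZMod.natCast_val, ZMod.cast_id]
  · intro a ha; exact ZMod.val_cast_of_lt (Finset.mem_range.mp ha)
  · intro a _; simp [ZMod.natCast_val, ZMod.cast_id]

lemma sum_sq_inv_all_aux {p : ℕ} (hp : p.Prime) (hp3 : 3 < p) :
    ∑ i ∈ Finset.Ioo 0 p, ((i : ZMod p) * (i : ZMod p))⁻¹ = 0 := by
  haveI : Fact p.Prime := ⟨hp⟩
  have hins : Finset.range p = insert 0 (Finset.Ioo 0 p) := by
    ext x; simp [Finset.mem_range, Finset.mem_Ioo]; omega
  have h1 : ∑ i ∈ Finset.Ioo 0 p, ((i : ZMod p) * (i : ZMod p))⁻¹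
      = ∑ x : ZMod p, (x * x)⁻¹ := by
    rw [sum_univ_eq_sum_range_aux (fun x => (x*x)⁻¹), hins,
      Finset.sum_insert (by simp)]
    simp
  rw [h1]
  have h2 : ∑ x : ZMod p, (x * x)⁻¹ = ∑ x : ZMod p, x * x := by
    refine Finset.sum_nbij' (i := fun x : ZMod p => x⁻¹) (j := fun x : ZMod p => x⁻¹)
      ?_ ?_ ?_ ?_ ?_
    · intros; exact Finset.mem_univ _
    · intros; exact Finset.mem_univ _
    · intros; simp
    · intros; simp
    · intros x _; rw [mul_inv]
  rw [h2]
  have := FiniteField.sum_pow_lt_card_sub_one (ZMod p) 2 (by rw [ZMod.card]; omega)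
  simpa [pow_two] using this

lemma sum_sq_inv_even_aux {p : ℕ} (hp : p.Prime) (hpo : p % 2 = 1) (hp3 : 3 < p) :
    ∑ i ∈ (Finset.Ioo 0 p).filter (fun i => Even i), ((i : ZMod p) * (i : ZMod p))⁻¹ = 0 := by
  haveI : Fact p.Prime := ⟨hp⟩
  have hall := sum_sq_inv_all_aux hp hp3
  have hEO : ∑ i ∈ (Finset.Ioo 0 p).filter (fun i => Even i), ((i : ZMod p) * (i : ZMod p))⁻¹
      = ∑ i ∈ (Finset.Ioo 0 p).filter (fun i => ¬ Even i), ((i : ZMod p) * (i : ZMod p))⁻¹ := by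
    refine Finset.sum_nbij' (i := fun i => p - i) (j := fun i => p - i) ?_ ?_ ?_ ?_ ?_
    · intro a ha
      simp only [Finset.mem_filter, Finset.mem_Ioo, Nat.even_iff, Nat.not_even_iff] at *
      omega
    · intro a ha
      simp only [Finset.mem_filter, Finset.mem_Ioo, Nat.even_iff, Nat.not_even_iff] at *
      omega
    · intro a ha; simp only [Finset.mem_filter, Finset.mem_Ioo] at ha; omega
    · intro a ha; simp only [Finset.mem_filter, Finset.mem_Ioo] at ha; omega
    · intro a ha
      simp only [Finset.mem_filter, Finset.mem_Ioo] at ha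
      rw [cast_sub_eq_neg_aux (by omega), neg_mul_neg]
  have hsplit := Finset.sum_filter_add_sum_filter_not (Finset.Ioo 0 p)
    (fun i => Even i) (fun i => ((i : ZMod p) * (i : ZMod p))⁻¹)
  rw [← hEO, hall] at hsplit
  have h2 : (2 : ZMod p) ≠ 0 := by
    have : ((2:ℕ) : ZMod p) ≠ 0 := by
      rw [Ne, ZMod.natCast_eq_zero_iff]
      intro h
      have := (Nat.prime_dvd_prime_iff_eq hp Nat.prime_two).mp h
      omega
    simpa using this
  have h2' : (2 : ZMod p) * ∑ i ∈ (Finset.Ioo 0 p).filter (fun i => Even i),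
      ((i : ZMod p) * (i : ZMod p))⁻¹ = 0 := by
    rw [two_mul]; exact hsplit
  rcases mul_eq_zero.mp h2' with h | h
  · exact absurd h h2
  · exact h

lemma sum_R_eq_zero_aux {p : ℕ} (hp : p.Prime) (hpo : p % 2 = 1) (hp3 : 3 < p) :
    ∑ q ∈ (((Finset.Ioo 0 p).filter (fun i => Even i)) ×ˢ
        ((Finset.Ioo 0 p).filter (fun i => Even i))).filter (fun q => p < q.1 + q.2),
      ((q.1 : ZMod p) * (q.2 : ZMod p))⁻¹ = 0 := by
  haveI : Fact p.Prime := ⟨hp⟩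
  set D := (((Finset.Ioo 0 p).filter (fun i => Even i)) ×ˢ
      ((Finset.Ioo 0 p).filter (fun i => Even i))).filter (fun q => p < q.1 + q.2) with hD
  have hmemD : ∀ q : ℕ × ℕ, q ∈ D ↔
      (0 < q.1 ∧ q.1 < p ∧ q.1 % 2 = 0 ∧ 0 < q.2 ∧ q.2 < p ∧ q.2 % 2 = 0 ∧ p < q.1 + q.2) := by
    intro q
    simp only [hD, Finset.mem_filter, Finset.mem_product, Finset.mem_Ioo, Nat.even_iff]
    tauto
  set R := ∑ q ∈ D, ((q.1 : ZMod p) * (q.2 : ZMod p))⁻¹ with hR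
  set G := ∑ q ∈ D, (((q.1 + q.2 : ℕ) : ZMod p))⁻¹ * (q.1 : ZMod p)⁻¹ with hG
  have hRG : R = G + G := by
    have step1 : R = ∑ q ∈ D, ((((q.1 + q.2 : ℕ) : ZMod p))⁻¹ * (q.1 : ZMod p)⁻¹
        + (((q.1 + q.2 : ℕ) : ZMod p))⁻¹ * (q.2 : ZMod p)⁻¹) := by
      rw [hR]
      apply Finset.sum_congr rfl
      intro q hq
      rw [hmemD] at hq
      obtain ⟨h1, h2, h3, h4, h5, h6, h7⟩ := hq
      have hx : ((q.1 : ℕ) : ZMod p) ≠ 0 := cast_ne_zero_of_lt' hp h1 (by omega) (by omega)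
      have hy : ((q.2 : ℕ) : ZMod p) ≠ 0 := cast_ne_zero_of_lt' hp h4 (by omega) (by omega)
      have hs : ((q.1 + q.2 : ℕ) : ZMod p) ≠ 0 :=
        cast_ne_zero_of_lt' hp (by omega) (by omega) (by omega)
      have hcast : ((q.1 + q.2 : ℕ) : ZMod p) = (q.1 : ZMod p) + (q.2 : ZMod p) := by
        push_cast; ring
      rw [hcast] at hs ⊢
      field_simp
      ring
    have step2 : ∑ q ∈ D, (((q.1 + q.2 : ℕ) : ZMod p))⁻¹ * (q.2 : ZMod p)⁻¹ = G := by
      rw [hG]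
      refine Finset.sum_nbij' (i := Prod.swap) (j := Prod.swap) ?_ ?_ ?_ ?_ ?_
      · intro a ha; rw [hmemD] at *; dsimp only [Prod.swap]; omega
      · intro a ha; rw [hmemD] at *; dsimp only [Prod.swap]; omega
      · intro a _; simp
      · intro a _; simp
      · intro a _
        dsimp only [Prod.swap, Prod.fst, Prod.snd]
        rw [Nat.add_comm]
    rw [step1, Finset.sum_add_distrib, step2]
  have hGR : G = -R := by
    rw [hG, hR, ← Finset.sum_neg_distrib]
    refine Finset.sum_nbij' (i := fun q : ℕ × ℕ => (q.1, 2*p - q.1 - q.2))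
      (j := fun q : ℕ × ℕ => (q.1, 2*p - q.1 - q.2)) ?_ ?_ ?_ ?_ ?_
    · intro a ha; rw [hmemD] at *; dsimp only; omega
    · intro a ha; rw [hmemD] at *; dsimp only; omega
    · intro a ha; rw [hmemD] at ha; dsimp only; ext <;> dsimp <;> omega
    · intro a ha; rw [hmemD] at ha; dsimp only; ext <;> dsimp <;> omega
    · intro a ha
      rw [hmemD] at ha
      dsimp only
      have h2 : ((2*p - a.1 - a.2 : ℕ) : ZMod p) = -(((a.1 + a.2 : ℕ)) : ZMod p) := by
        have h : (2*p - a.1 - a.2 : ℕ) = 2*p - (a.1 + a.2) := by omega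
        rw [h, cast_sub_eq_neg_aux' (by omega)]
      rw [h2]
      push_cast
      rw [mul_neg, inv_neg, neg_neg, mul_inv]
      ring
  have h3 : (3 : ZMod p) * R = 0 := by
    have : R = -R + -R := by rw [← hGR, hRG]
    linear_combination this
  have h3ne : (3 : ZMod p) ≠ 0 := by
    have : ((3:ℕ) : ZMod p) ≠ 0 := by
      rw [Ne, ZMod.natCast_eq_zero_iff]
      intro h
      have := (Nat.prime_dvd_prime_iff_eq hp Nat.prime_three).mp h
      omega
    simpa using this
  rcases mul_eq_zero.mp h3 with h | h
  · exact absurd h h3ne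
  · exact h

lemma sum_product_filter_aux {M : Type*} [AddCommMonoid M] (A B : Finset ℕ) (C : ℕ → ℕ → Prop)
    [DecidablePred fun q : ℕ × ℕ => C q.1 q.2] [∀ i, DecidablePred (C i)]
    (F : ℕ → ℕ → M) :
    ∑ q ∈ (A ×ˢ B).filter (fun q => C q.1 q.2), F q.1 q.2
      = ∑ i ∈ A, ∑ j ∈ B.filter (C i), F i j := by
  rw [Finset.sum_filter,
    Finset.sum_product' A B (fun i j => if C i j then F i j else 0)]
  exact Finset.sum_congr rfl fun i _ => (Finset.sum_filter _ _).symm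

theorem two_S00_eq_neg_S01 (p : ℕ) (hp : p.Prime) (hodd : Odd p) :
    2 * (∑ i ∈ (Finset.Ioo 0 p).filter (fun i => Even i),
          ∑ j ∈ (Finset.Ioo i p).filter (fun j => Even j),
            ((i : ZMod p) * (j : ZMod p))⁻¹)
      = -(∑ i ∈ (Finset.Ioo 0 p).filter (fun i => Even i),
          ∑ j ∈ (Finset.Ioo i p).filter (fun j => Odd j),
            ((i : ZMod p) * (j : ZMod p))⁻¹) := by
  haveI : Fact p.Prime := ⟨hp⟩
  have hpo : p % 2 = 1 := Nat.odd_iff.mp hodd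
  by_cases hp3 : p = 3
  · subst hp3; decide
  have hp3' : 3 < p := by
    rcases hp.eq_one_or_self_of_dvd 2 with _
    have := hp.two_le
    rcases Nat.lt_or_ge p 4 with h | h
    · interval_cases p <;> omega
    · omega
  set A := (Finset.Ioo 0 p).filter (fun i => Even i) with hA
  have hmemA : ∀ i, i ∈ A ↔ (0 < i ∧ i < p ∧ i % 2 = 0) := by
    intro i; simp only [hA, Finset.mem_filter, Finset.mem_Ioo, Nat.even_iff]; tauto
  set F : ℕ → ℕ → ZMod p := fun i j => ((i : ZMod p) * (j : ZMod p))⁻¹ with hF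
  -- Step A : 2 * S00 = sum over off-diagonal pairs
  have stepA : (∑ i ∈ A, ∑ j ∈ (Finset.Ioo i p).filter (fun j => Even j), F i j)
      = ∑ q ∈ (A ×ˢ A).filter (fun q => q.1 < q.2), F q.1 q.2 := by
    rw [sum_product_filter_aux A A (fun i j => i < j) F]
    apply Finset.sum_congr rfl
    intro i hi
    rw [hmemA] at hi
    apply Finset.sum_congr _ (fun _ _ => rfl)
    ext j
    simp only [hA, Finset.mem_filter, Finset.mem_Ioo, Nat.even_iff]
    constructor
    · rintro ⟨⟨h1, h2⟩, h3⟩; exact ⟨⟨⟨by omega, h2⟩, by omega⟩, h1⟩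
    · rintro ⟨⟨⟨h1, h2⟩, h3⟩, h4⟩; exact ⟨⟨h4, h2⟩, h3⟩
  have stepA2 : ∑ q ∈ (A ×ˢ A).filter (fun q => q.2 < q.1), F q.1 q.2
      = ∑ q ∈ (A ×ˢ A).filter (fun q => q.1 < q.2), F q.1 q.2 := by
    refine Finset.sum_nbij' (i := Prod.swap) (j := Prod.swap) ?_ ?_ ?_ ?_ ?_
    · intro a ha
      simp only [Finset.mem_filter, Finset.mem_product] at *
      exact ⟨⟨ha.1.2, ha.1.1⟩, ha.2⟩
    · intro a ha
      simp only [Finset.mem_filter, Finset.mem_product] at *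
      exact ⟨⟨ha.1.2, ha.1.1⟩, ha.2⟩
    · intro a _; simp
    · intro a _; simp
    · intro a _
      simp only [hF, Prod.swap, Prod.fst, Prod.snd]
      rw [mul_comm]
  have stepA3 : 2 * (∑ i ∈ A, ∑ j ∈ (Finset.Ioo i p).filter (fun j => Even j), F i j)
      = ∑ q ∈ (A ×ˢ A).filter (fun q => ¬ q.1 = q.2), F q.1 q.2 := by
    have hsp := Finset.sum_filter_add_sum_filter_not
      ((A ×ˢ A).filter (fun q : ℕ × ℕ => ¬ q.1 = q.2)) (fun q => q.1 < q.2)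
      (fun q : ℕ × ℕ => F q.1 q.2)
    rw [Finset.filter_filter, Finset.filter_filter] at hsp
    have e1 : (A ×ˢ A).filter (fun q : ℕ × ℕ => ¬ q.1 = q.2 ∧ q.1 < q.2)
        = (A ×ˢ A).filter (fun q => q.1 < q.2) := by
      apply Finset.filter_congr; intro q _; constructor
      · rintro ⟨_, h⟩; exact h
      · intro h; omega
    have e2 : (A ×ˢ A).filter (fun q : ℕ × ℕ => ¬ q.1 = q.2 ∧ ¬ q.1 < q.2)
        = (A ×ˢ A).filter (fun q => q.2 < q.1) := by
      apply Finset.filter_congr; intro q _; constructor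
      · rintro ⟨h1, h2⟩; omega
      · intro h; omega
    rw [e1, e2, stepA2] at hsp
    rw [stepA, two_mul, hsp]
  -- Step B : -S01 = sum over pairs with small sum
  have stepB : (∑ i ∈ A, ∑ j ∈ (Finset.Ioo i p).filter (fun j => Odd j), F i j)
      = -∑ q ∈ (A ×ˢ A).filter (fun q => q.1 + q.2 < p), F q.1 q.2 := by
    rw [sum_product_filter_aux A A (fun i j => i + j < p) F, ← Finset.sum_neg_distrib]
    apply Finset.sum_congr rfl
    intro i hi
    rw [hmemA] at hi
    rw [← Finset.sum_neg_distrib]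
    refine Finset.sum_nbij' (i := fun j => p - j) (j := fun b => p - b) ?_ ?_ ?_ ?_ ?_
    · intro a ha
      simp only [Finset.mem_filter, Finset.mem_Ioo, Nat.odd_iff] at ha
      simp only [hA, Finset.mem_filter, Finset.mem_Ioo, Nat.even_iff]
      omega
    · intro a ha
      simp only [hA, Finset.mem_filter, Finset.mem_Ioo, Nat.even_iff] at ha
      simp only [Finset.mem_filter, Finset.mem_Ioo, Nat.odd_iff]
      omega
    · intro a ha
      simp only [Finset.mem_filter, Finset.mem_Ioo] at ha; omega
    · intro a ha
      simp only [Finset.mem_filter, Finset.mem_Ioo] at ha; omega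
    · intro a ha
      simp only [Finset.mem_filter, Finset.mem_Ioo] at ha
      simp only [hF]
      rw [cast_sub_eq_neg_aux (by omega), mul_neg, inv_neg, neg_neg]
  -- diagonal sum
  have stepD : ∑ q ∈ (A ×ˢ A).filter (fun q : ℕ × ℕ => q.1 = q.2), F q.1 q.2
      = ∑ i ∈ A, ((i : ZMod p) * (i : ZMod p))⁻¹ := by
    refine Finset.sum_nbij' (i := fun q : ℕ × ℕ => q.1) (j := fun i => (i, i)) ?_ ?_ ?_ ?_ ?_
    · intro a ha
      simp only [Finset.mem_filter, Finset.mem_product] at ha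
      exact ha.1.1
    · intro a ha
      simp only [Finset.mem_filter, Finset.mem_product]
      exact ⟨⟨ha, ha⟩, by trivial⟩
    · intro a ha
      simp only [Finset.mem_filter, Finset.mem_product] at ha
      have := ha.2; ext <;> dsimp <;> omega
    · intro a _; rfl
    · intro a ha
      simp only [Finset.mem_filter, Finset.mem_product] at ha
      simp only [hF]
      rw [ha.2]
  -- large-sum filter equals complement
  have hcompl : (A ×ˢ A).filter (fun q : ℕ × ℕ => ¬ q.1 + q.2 < p)
      = (A ×ˢ A).filter (fun q => p < q.1 + q.2) := by
    apply Finset.filter_congr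
    intro q hq
    simp only [Finset.mem_product, hmemA] at hq
    constructor
    · intro h
      rcases Nat.lt_or_ge p (q.1 + q.2) with h' | h'
      · exact h'
      · exfalso; have : q.1 + q.2 = p := by omega
        omega
    · intro h; omega
  have hdiag0 := sum_sq_inv_even_aux hp hpo hp3'
  have hR0 := sum_R_eq_zero_aux hp hpo hp3'
  have split1 := Finset.sum_filter_add_sum_filter_not (A ×ˢ A)
    (fun q : ℕ × ℕ => q.1 = q.2) (fun q : ℕ × ℕ => F q.1 q.2)
  have split2 := Finset.sum_filter_add_sum_filter_not (A ×ˢ A)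
    (fun q : ℕ × ℕ => q.1 + q.2 < p) (fun q : ℕ × ℕ => F q.1 q.2)
  rw [stepD, hdiag0, zero_add] at split1
  rw [hcompl] at split2
  have hR0' : ∑ q ∈ (A ×ˢ A).filter (fun q : ℕ × ℕ => p < q.1 + q.2), F q.1 q.2 = 0 := hR0
  rw [hR0', add_zero] at split2
  rw [stepA3, stepB, split1, split2, neg_neg]
end

section
/- Let p be an odd prime. Then in ZMod p^3, (-1)^((p-1)/2) · C(p-1, (p-1)/2) = 1 - 2p·S_0 + 4p^2·S_00, where C(p-1, (p-1)/2) is the central binomial coefficient, S_0 is the sum of inverses of even integers i with 0 < i < p, and S_00 is the sum of 1/(ij) over pairs 0 < i < j < p with both i and j even. -/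
/-!
Writing `m = (p - 1) / 2`, the identity `C(p-1, k+1) (k+1) = C(p-1, k) (p-1-k)` gives
`(-1)^m C(p-1, m) = ∏_{k=1}^m (1 - p/k) = ∏_{i even, 0<i<p} (1 - 2p/i)` in `ZMod (p^e)`.
Since `(2p)^3 = 0` in `ZMod (p^3)`, only the elementary symmetric functions of degree at most two
of the `1/i` survive in the expansion of this product.
-/

open Finset

theorem Finset.prod_one_sub_mul_of_pow_three_eq_zero {ι R : Type*} [LinearOrder ι] [CommRing R]
    {q : R} (hq : q ^ 3 = 0) (s : Finset ι) (x : ι → R) :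
    ∏ i ∈ s, (1 - q * x i)
      = 1 - q * ∑ i ∈ s, x i + q ^ 2 * ∑ i ∈ s, ∑ j ∈ s with i < j, x i * x j := by
  induction s using Finset.induction_on_max with
  | empty => simp
  | insert a s ha ih =>
    have ha' : a ∉ s := fun h => lt_irrefl a (ha a h)
    have hpairs : ∑ i ∈ insert a s, ∑ j ∈ insert a s with i < j, x i * x j
        = (∑ i ∈ s, x i) * x a + ∑ i ∈ s, ∑ j ∈ s with i < j, x i * x j := by
      have hmax : ∀ i ∈ insert a s, ¬ a < i := fun i hi =>
        (mem_insert.mp hi).elim (fun h => h ▸ lt_irrefl a) fun h => (ha i h).not_gt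
      rw [sum_insert ha', filter_false_of_mem hmax, sum_empty, zero_add, sum_mul,
        ← sum_add_distrib]
      refine sum_congr rfl fun i hi => ?_
      rw [filter_insert, if_pos (ha i hi), sum_insert fun h => ha' (mem_filter.mp h).1]
    rw [prod_insert ha', ih, sum_insert ha', hpairs]
    linear_combination (-(x a * ∑ i ∈ s, ∑ j ∈ s with i < j, x i * x j)) * hq

namespace ZMod

theorem mul_inv_of_isUnit {n : ℕ} {a b : ZMod n} (ha : IsUnit a) (hb : IsUnit b) :
    (a * b)⁻¹ = a⁻¹ * b⁻¹ := by
  obtain ⟨u, rfl⟩ := ha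
  obtain ⟨v, rfl⟩ := hb
  rw [← Units.val_mul, inv_coe_unit, inv_coe_unit, inv_coe_unit, mul_inv, Units.val_mul]

theorem isUnit_natCast_prime_pow {p i : ℕ} (e : ℕ) (hp : p.Prime) (hi0 : 0 < i) (hip : i < p) :
    IsUnit (i : ZMod (p ^ e)) :=
  (isUnit_iff_coprime _ _).mpr ((Nat.coprime_of_lt_prime hi0.ne' hip hp).symm.pow_right e)

end ZMod

theorem neg_one_pow_mul_choose_eq_prod {p : ℕ} (e : ℕ) (hp : p.Prime) {m : ℕ} (hm : m < p) :
    (-1 : ZMod (p ^ e)) ^ m * ((p - 1).choose m : ZMod (p ^ e))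
      = ∏ k ∈ range m, (1 - p * ((k + 1 : ℕ) : ZMod (p ^ e))⁻¹) := by
  induction m with
  | zero => simp
  | succ m ih =>
    set u : ZMod (p ^ e) := ((m + 1 : ℕ) : ZMod (p ^ e))
    have hu : u * u⁻¹ = 1 :=
      ZMod.mul_inv_of_unit u (ZMod.isUnit_natCast_prime_pow e hp (by omega) hm)
    have hstep : ((p - 1).choose (m + 1) : ZMod (p ^ e)) * u
        = ((p - 1).choose m : ZMod (p ^ e)) * (p - u) := by
      have h := congrArg (Nat.cast : ℕ → ZMod (p ^ e)) (Nat.choose_succ_right_eq (p - 1) m)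
      rwa [show p - 1 - m = p - (m + 1) by omega, Nat.cast_mul, Nat.cast_mul,
        Nat.cast_sub hm.le] at h
    rw [prod_range_succ, ← ih (by omega)]
    linear_combination (-(-1 : ZMod (p ^ e)) ^ m) * (u⁻¹ * hstep
      - (((p - 1).choose m : ZMod (p ^ e)) + ((p - 1).choose (m + 1) : ZMod (p ^ e))) * hu)

theorem prod_range_half_eq_prod_even {p : ℕ} (e : ℕ) (hp : p.Prime) (hodd : Odd p) :
    ∏ k ∈ range ((p - 1) / 2), (1 - p * ((k + 1 : ℕ) : ZMod (p ^ e))⁻¹)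
      = ∏ i ∈ Ioo 0 p with Even i, (1 - 2 * p * (i : ZMod (p ^ e))⁻¹) := by
  obtain ⟨m, hpm⟩ := hodd
  have hevens : (range m).image (fun k => 2 * (k + 1)) = {i ∈ Ioo 0 p | Even i} := by
    ext i
    simp only [mem_image, mem_range, mem_filter, mem_Ioo, Nat.even_iff]
    exact ⟨by rintro ⟨k, hk, rfl⟩; omega, fun h => ⟨i / 2 - 1, by omega, by omega⟩⟩
  rw [← hevens, prod_image fun _ _ _ _ h => by omega, show (p - 1) / 2 = m by omega]
  refine prod_congr rfl fun k hk => ?_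
  have hk := mem_range.mp hk
  have h2 : IsUnit (2 : ZMod (p ^ e)) := by
    exact_mod_cast ZMod.isUnit_natCast_prime_pow e hp (i := 2) (by omega) (by omega)
  rw [Nat.cast_mul, Nat.cast_ofNat,
    ZMod.mul_inv_of_isUnit h2 (ZMod.isUnit_natCast_prime_pow e hp (by omega) (by omega))]
  linear_combination (p * ((k + 1 : ℕ) : ZMod (p ^ e))⁻¹) * ZMod.mul_inv_of_unit _ h2

theorem central_binom_mod_p_cubed (p : ℕ) (hp : p.Prime) (hodd : Odd p) :
    (-1 : ZMod (p ^ 3)) ^ ((p - 1) / 2) * ((p - 1).choose ((p - 1) / 2) : ZMod (p ^ 3))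
      = 1 - 2 * (p : ZMod (p ^ 3)) *
            (∑ i ∈ (Finset.Ioo 0 p).filter (fun i => Even i), ((i : ZMod (p ^ 3)))⁻¹)
          + 4 * (p : ZMod (p ^ 3)) ^ 2 *
            (∑ i ∈ (Finset.Ioo 0 p).filter (fun i => Even i),
              ∑ j ∈ (Finset.Ioo i p).filter (fun j => Even j),
                ((i : ZMod (p ^ 3)) * (j : ZMod (p ^ 3)))⁻¹) := by
  have hq : (2 * p : ZMod (p ^ 3)) ^ 3 = 0 := by
    rw [mul_pow, ← Nat.cast_pow, ZMod.natCast_self, mul_zero]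
  have hpairs : ∀ i ∈ Ioo 0 p,
      ∑ j ∈ {j ∈ Ioo 0 p | Even j} with i < j,
          (i : ZMod (p ^ 3))⁻¹ * (j : ZMod (p ^ 3))⁻¹
        = ∑ j ∈ Ioo i p with Even j, ((i : ZMod (p ^ 3)) * j)⁻¹ := by
    intro i hi
    have hi := mem_Ioo.mp hi
    refine sum_congr (by ext j; simp only [mem_filter, mem_Ioo, Nat.even_iff]; omega)
      fun j hj => ?_
    have hj := mem_Ioo.mp (mem_filter.mp hj).1
    exact (ZMod.mul_inv_of_isUnit (ZMod.isUnit_natCast_prime_pow 3 hp hi.1 hi.2)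
      (ZMod.isUnit_natCast_prime_pow 3 hp (i := j) (by omega) hj.2)).symm
  have hm : (p - 1) / 2 < p := by have := hp.pos; omega
  rw [neg_one_pow_mul_choose_eq_prod 3 hp hm, prod_range_half_eq_prod_even 3 hp hodd,
    Finset.prod_one_sub_mul_of_pow_three_eq_zero hq,
    sum_congr rfl fun i hi => hpairs i (mem_filter.mp hi).1]
  ring
end

section
/- Let p be a prime with p > 3 and let q = (2^(p-1) - 1)/p be the Fermat quotient of p to base 2. Then, in ZMod p^2, the sum of the inverses of the integers 1, 2, ..., (p-1)/2 is congruent to -2q + p·q^2 (Lehmer's congruence). -/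
/-!
Write `p = 2m + 1`. The integer identity `∏ᵢ (p - i) = 2^m ∏ᵢ (p - 2i)` (`1 ≤ i ≤ m`; both sides
are `(2m)!/m!`) becomes, after dividing by `∏ᵢ (-i)`, the identity
`∏ᵢ (1 - p/i) = 4^m ∏ᵢ (1 - p/(2i))` modulo `p^3`, where `4^m = 2^(p-1) = 1 + pq`.
Expanding both products to second order in `p` and dividing by `p` expresses `∑ 1/i + 2q`
modulo `p^2` as `p` times a quadratic expression in `∑ 1/i` and `∑ 1/i^2`. Modulo `p` this first
gives `∑ 1/i ≡ -2q`, and `∑ 1/i^2 ≡ 0` because multiplication by `2` permutes `±{1, …, m}`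
in `ZMod p`; so that quadratic expression is `≡ q^2`.
-/

open Finset
open scoped Nat

theorem Nat.two_pow_mul_factorial_mul_prod_odd (m : ℕ) :
    2 ^ m * m ! * ∏ i ∈ range m, (2 * i + 1) = (2 * m)! := by
  induction m with
  | zero => simp
  | succ m ih =>
    rw [prod_range_succ, show 2 * (m + 1) = 2 * m + 1 + 1 by ring, factorial_succ,
      factorial_succ, factorial_succ, ← ih]
    ring

theorem Nat.prod_range_two_mul_sub (m : ℕ) :
    ∏ i ∈ range m, (2 * m - i) = 2 ^ m * ∏ i ∈ range m, (2 * i + 1) := by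
  apply Nat.eq_of_mul_eq_mul_left m.factorial_pos
  rw [← descFactorial_eq_prod_range, ← mul_assoc, mul_comm _ (2 ^ m),
    two_pow_mul_factorial_mul_prod_odd]
  simpa [two_mul] using factorial_mul_descFactorial (show m ≤ 2 * m by omega)

theorem prod_Icc_sub_eq_two_pow_mul_prod_sub {R : Type*} [CommRing R] (m : ℕ) :
    ∏ i ∈ Icc 1 m, ((2 * m + 1 : R) - i) = 2 ^ m * ∏ i ∈ Icc 1 m, ((2 * m + 1 : R) - 2 * i) := by
  have h := congrArg (Nat.cast : ℕ → R) (Nat.prod_range_two_mul_sub m)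
  rw [← prod_range_reflect (fun i => 2 * i + 1)] at h
  rw [← Ico_add_one_right_eq_Icc, prod_Ico_eq_prod_range, prod_Ico_eq_prod_range,
    add_tsub_cancel_right]
  push_cast at h
  convert h using 3 with i hi i hi
  · rw [mem_range] at hi
    push_cast [Nat.cast_sub (show i ≤ 2 * m by omega)]
    ring
  · rw [mem_range] at hi
    push_cast [Nat.cast_sub (show i ≤ m - 1 by omega), Nat.cast_sub (show 1 ≤ m by omega)]
    ring

theorem prod_one_sub_mul_eq_four_pow_mul_prod {R : Type*} [CommRing R] (m : ℕ) {x : ℕ → R}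
    (hx : ∀ i ∈ Icc 1 m, (i : R) * x i = 1) {h : R} (hh : 2 * h = 1) :
    ∏ i ∈ Icc 1 m, (1 - (2 * m + 1 : R) * x i)
      = 4 ^ m * ∏ i ∈ Icc 1 m, (1 - (2 * m + 1 : R) * h * x i) :=
  calc ∏ i ∈ Icc 1 m, (1 - (2 * m + 1 : R) * x i)
      = ∏ i ∈ Icc 1 m, (-x i * ((2 * m + 1 : R) - i)) :=
        prod_congr rfl fun i hi => by linear_combination -hx i hi
    _ = 2 ^ m * ∏ i ∈ Icc 1 m, (-x i * ((2 * m + 1 : R) - 2 * i)) := by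
        rw [prod_mul_distrib, prod_Icc_sub_eq_two_pow_mul_prod_sub, prod_mul_distrib]
        ring
    _ = 4 ^ m * ∏ i ∈ Icc 1 m, (h * (-x i * ((2 * m + 1 : R) - 2 * i))) := by
        rw [prod_mul_distrib (f := fun _ => h), prod_const, Nat.card_Icc, add_tsub_cancel_right,
          ← mul_assoc, ← mul_pow, show (4 : R) * h = 2 * (2 * h) by ring, hh, mul_one]
    _ = 4 ^ m * ∏ i ∈ Icc 1 m, (1 - (2 * m + 1 : R) * h * x i) :=
        congrArg _ (prod_congr rfl fun i hi => by linear_combination (i * x i) * hh + hx i hi)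

theorem two_mul_prod_one_add_mul_of_pow_three_eq_zero {ι R : Type*} [CommRing R] {c : R}
    (hc : c ^ 3 = 0) (s : Finset ι) (x : ι → R) :
    2 * ∏ i ∈ s, (1 + c * x i)
      = 2 + 2 * c * ∑ i ∈ s, x i + c ^ 2 * ((∑ i ∈ s, x i) ^ 2 - ∑ i ∈ s, x i ^ 2) := by
  classical
  induction s using Finset.induction_on with
  | empty => simp
  | insert a s ha ih =>
    rw [prod_insert ha, sum_insert ha, sum_insert ha]
    linear_combination (1 + c * x a) * ih + (x a * ((∑ i ∈ s, x i) ^ 2 - ∑ i ∈ s, x i ^ 2)) * hc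

theorem mul_sum_add_eq_sq_mul_of_prod_eq {ι R : Type*} [CommRing R] {ε h q : R}
    (hε : ε ^ 3 = 0) (hh : 2 * h = 1) (s : Finset ι) (x : ι → R)
    (hprod : ∏ i ∈ s, (1 - ε * x i) = (1 + ε * q) * ∏ i ∈ s, (1 - ε * h * x i)) :
    ε * (∑ i ∈ s, x i + 2 * q)
      = ε ^ 2 * (3 * h ^ 2 * ((∑ i ∈ s, x i) ^ 2 - ∑ i ∈ s, x i ^ 2) + q * ∑ i ∈ s, x i) := by
  have hA := two_mul_prod_one_add_mul_of_pow_three_eq_zero (c := -ε) (by linear_combination -hε) s x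
  have hB := two_mul_prod_one_add_mul_of_pow_three_eq_zero (c := -(ε * h))
    (by linear_combination -h ^ 3 * hε) s x
  simp only [neg_mul, ← sub_eq_add_neg] at hA hB
  set S := ∑ i ∈ s, x i
  set E := S ^ 2 - ∑ i ∈ s, x i ^ 2
  have hB8 : 8 * ∏ i ∈ s, (1 - ε * h * x i) = 8 - 4 * ε * S + ε ^ 2 * E := by
    linear_combination 4 * hB + (-4 * ε * S + ε ^ 2 * E * (2 * h + 1)) * hh
  have hE : ε * (4 * S + 8 * q) = ε ^ 2 * (3 * E + 4 * q * S) := by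
    linear_combination -8 * hprod + 4 * hA - (1 + ε * q) * hB8 - q * E * hε
  linear_combination h ^ 2 * hE - (2 * h + 1) * (ε * (S + 2 * q) - ε ^ 2 * q * S) * hh

theorem ZMod.natCast_mul_eq_zero_iff_castHom_eq_zero {n m N : ℕ} (hm : m ≠ 0) (hN : n * m = N)
    (a : ZMod N) : (m : ZMod N) * a = 0 ↔ ZMod.castHom (Dvd.intro m hN) (ZMod n) a = 0 := by
  subst hN
  obtain ⟨z, rfl⟩ := ZMod.intCast_surjective a
  rw [map_intCast, ← Int.cast_natCast, ← Int.cast_mul, ZMod.intCast_zmod_eq_zero_iff_dvd,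
    ZMod.intCast_zmod_eq_zero_iff_dvd, Nat.cast_mul, mul_comm (n : ℤ),
    Int.mul_dvd_mul_iff_left (by exact_mod_cast hm)]

theorem ZMod.castHom_sum_inv_pow {n d : ℕ} (hd : d ∣ n) {s : Finset ℕ}
    (hs : ∀ i ∈ s, i.Coprime n) (k : ℕ) :
    ZMod.castHom hd (ZMod d) (∑ i ∈ s, ((i : ZMod n)⁻¹) ^ k) = ∑ i ∈ s, ((i : ZMod d)⁻¹) ^ k := by
  rw [map_sum]
  refine sum_congr rfl fun i hi => ?_
  rw [map_pow, ZMod.inv_eq_of_mul_eq_one _ (i : ZMod d) _ (by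
    rw [← map_natCast (ZMod.castHom hd (ZMod d)), ← map_mul, ZMod.coe_mul_inv_eq_one i (hs i hi),
      map_one])]

theorem ZMod.sum_Icc_comp_mul_eq {p : ℕ} [Fact p.Prime] {M : Type*} [AddCommMonoid M]
    {f : ZMod p → M} (hf : ∀ x, f (-x) = f x) {a : ZMod p} (ha : a ≠ 0) :
    ∑ i ∈ Icc 1 (p / 2), f (a * i) = ∑ i ∈ Icc 1 (p / 2), f i := by
  have h := congrArg (fun s => (s.map fun i : ℕ => f i).sum)
    (ZMod.Ico_map_valMinAbs_natAbs_eq_Ico_map_id p a ha)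
  simp only [Multiset.map_map, Function.comp_def, ZMod.natCast_natAbs_valMinAbs, apply_ite f, hf,
    ite_self, Multiset.map_id'] at h
  rwa [← Ico_add_one_right_eq_Icc]

theorem ZMod.sum_Icc_inv_sq_eq_zero {p : ℕ} [Fact p.Prime] (hp3 : 3 < p) :
    ∑ i ∈ Icc 1 (p / 2), ((i : ZMod p)⁻¹) ^ 2 = 0 := by
  have hne (k : ℕ) (hk : 0 < k) (hkp : k < p) : (k : ZMod p) ≠ 0 := by
    rw [Ne, ZMod.natCast_eq_zero_iff]
    exact Nat.not_dvd_of_pos_of_lt hk hkp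
  have h2 : (2 : ZMod p) * 2⁻¹ = 1 := mul_inv_cancel₀ (by exact_mod_cast hne 2 two_pos (by omega))
  have h3 : (3 : ZMod p) ≠ 0 := by exact_mod_cast hne 3 three_pos hp3
  have h := ZMod.sum_Icc_comp_mul_eq (f := fun x : ZMod p => (x⁻¹) ^ 2) (by simp)
    (left_ne_zero_of_mul_eq_one h2)
  simp only [mul_inv, mul_pow, ← mul_sum] at h
  refine (mul_eq_zero.mp ?_).resolve_left h3
  linear_combination -4 * h + (2 * 2⁻¹ + 1) * (∑ i ∈ Icc 1 (p / 2), ((i : ZMod p)⁻¹) ^ 2) * h2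

theorem Nat.coprime_pow_of_mem_Icc_half {p i : ℕ} (hp : p.Prime) (k : ℕ)
    (hi : i ∈ Icc 1 (p / 2)) : i.Coprime (p ^ k) := by
  rw [mem_Icc] at hi
  exact (Nat.coprime_of_lt_prime (by omega) (by omega) hp).symm.pow_right k

theorem Nat.pow_sub_one_eq_one_add_mul_div {p n : ℕ} (hp : p.Prime) (hn : n.Coprime p) :
    n ^ (p - 1) = 1 + p * ((n ^ (p - 1) - 1) / p) := by
  have hpos : 0 < n ^ (p - 1) :=
    pow_pos (Nat.pos_of_ne_zero fun h => by simp [h, hp.ne_one] at hn) _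
  rw [Nat.mul_div_cancel'
    ((Nat.modEq_iff_dvd' hpos).mp (Nat.ModEq.pow_card_sub_one_eq_one hp hn).symm)]
  omega

theorem ZMod.natCast_mul_sum_Icc_inv_add_eq {p : ℕ} (hp : p.Prime) (hp2 : p ≠ 2) {q : ℕ}
    (hq : 2 ^ (p - 1) = 1 + p * q) {h : ZMod (p ^ 3)} (hh : 2 * h = 1) :
    (p : ZMod (p ^ 3)) * (∑ i ∈ Icc 1 (p / 2), (i : ZMod (p ^ 3))⁻¹ + 2 * (q : ZMod (p ^ 3)))
      = (p : ZMod (p ^ 3)) ^ 2 * (3 * h ^ 2 * ((∑ i ∈ Icc 1 (p / 2), (i : ZMod (p ^ 3))⁻¹) ^ 2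
          - ∑ i ∈ Icc 1 (p / 2), ((i : ZMod (p ^ 3))⁻¹) ^ 2)
        + (q : ZMod (p ^ 3)) * ∑ i ∈ Icc 1 (p / 2), (i : ZMod (p ^ 3))⁻¹) := by
  set m := p / 2
  have hpm : p = 2 * m + 1 := by have := hp.eq_one_or_self_of_dvd 2; omega
  have hp' : (p : ZMod (p ^ 3)) = 2 * m + 1 := by exact_mod_cast congrArg Nat.cast hpm
  have h4 : (4 : ZMod (p ^ 3)) ^ m = 1 + p * (q : ZMod (p ^ 3)) := by
    rw [show (4 : ZMod (p ^ 3)) ^ m = 2 ^ (p - 1) by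
      rw [show p - 1 = 2 * m by omega, pow_mul]; norm_num]
    exact_mod_cast congrArg (Nat.cast : ℕ → ZMod (p ^ 3)) hq
  refine mul_sum_add_eq_sq_mul_of_prod_eq (by rw [← Nat.cast_pow, ZMod.natCast_self]) hh _ _ ?_
  rw [← h4, hp']
  exact prod_one_sub_mul_eq_four_pow_mul_prod m
    (fun i hi => ZMod.coe_mul_inv_eq_one i (Nat.coprime_pow_of_mem_Icc_half hp 3 hi)) hh

theorem ZMod.natCast_mul_sum_Icc_inv_add_sub_eq_zero {p : ℕ} (hp : p.Prime) (hp3 : 3 < p)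
    {q : ℕ} (hq : 2 ^ (p - 1) = 1 + p * q) :
    (p : ZMod (p ^ 3)) * (∑ i ∈ Icc 1 (p / 2), (i : ZMod (p ^ 3))⁻¹ + 2 * q - p * q ^ 2) = 0 := by
  have : Fact p.Prime := ⟨hp⟩
  obtain ⟨h, hh⟩ : ∃ h : ZMod (p ^ 3), 2 * h = 1 := ⟨_, by
    exact_mod_cast ZMod.coe_mul_inv_eq_one 2 (Nat.coprime_pow_of_mem_Icc_half hp 3
      (mem_Icc.mpr ⟨one_le_two, by omega⟩))⟩
  have hrel := ZMod.natCast_mul_sum_Icc_inv_add_eq hp (by omega) hq hh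
  set S := ∑ i ∈ Icc 1 (p / 2), (i : ZMod (p ^ 3))⁻¹
  set T := ∑ i ∈ Icc 1 (p / 2), ((i : ZMod (p ^ 3))⁻¹) ^ 2
  have hp_cube : (p : ZMod (p ^ 3)) ^ 3 = 0 := by rw [← Nat.cast_pow, ZMod.natCast_self]
  set f := ZMod.castHom (Dvd.intro _ (show p * p ^ 2 = p ^ 3 by ring)) (ZMod p)
  have hf (a : ZMod (p ^ 3)) : ((p ^ 2 : ℕ) : ZMod (p ^ 3)) * a = 0 ↔ f a = 0 :=
    ZMod.natCast_mul_eq_zero_iff_castHom_eq_zero (by positivity) (by ring) a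
  have hT : f T = 0 := by
    rw [ZMod.castHom_sum_inv_pow _ fun i hi => Nat.coprime_pow_of_mem_Icc_half hp 3 hi,
      ZMod.sum_Icc_inv_sq_eq_zero hp3]
  have hh1 : 2 * f h = 1 := by rw [← map_one f, ← hh, map_mul, map_ofNat]
  -- `p * hrel` has a vanishing right-hand side, so `S ≡ -2q (mod p)`.
  have hS : f S = -2 * q := by
    have : ((p ^ 2 : ℕ) : ZMod (p ^ 3)) * (S + 2 * q) = 0 := by
      push_cast
      linear_combination p * hrel + (3 * h ^ 2 * (S ^ 2 - T) + q * S) * hp_cube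
    rw [hf] at this
    simp only [map_add, map_mul, map_natCast, map_ofNat] at this
    linear_combination this
  have hX : ((p ^ 2 : ℕ) : ZMod (p ^ 3)) * (3 * h ^ 2 * (S ^ 2 - T) + q * S - q ^ 2) = 0 := by
    rw [hf]
    simp only [map_add, map_sub, map_mul, map_pow, map_natCast, map_ofNat, hS, hT]
    linear_combination 3 * (2 * f h + 1) * q ^ 2 * hh1
  push_cast at hX
  linear_combination hrel + hX

theorem lehmer_congruence (p : ℕ) (hp : p.Prime) (hp3 : 3 < p) :
    ∑ i ∈ Finset.Icc 1 ((p - 1) / 2), ((i : ZMod (p ^ 2)))⁻¹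
      = -(2 * (((2 ^ (p - 1) - 1) / p : ℕ) : ZMod (p ^ 2)))
        + (p : ZMod (p ^ 2)) * (((2 ^ (p - 1) - 1) / p : ℕ) : ZMod (p ^ 2)) ^ 2 := by
  have hq := Nat.pow_sub_one_eq_one_add_mul_div hp ((Nat.coprime_primes Nat.prime_two hp).2 (by omega))
  have h := ZMod.natCast_mul_sum_Icc_inv_add_sub_eq_zero hp hp3 hq
  rw [ZMod.natCast_mul_eq_zero_iff_castHom_eq_zero hp.ne_zero (show p ^ 2 * p = p ^ 3 by ring)]
    at h
  have hS := ZMod.castHom_sum_inv_pow (Dvd.intro p (show p ^ 2 * p = p ^ 3 by ring))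
    (fun i hi => Nat.coprime_pow_of_mem_Icc_half hp 3 hi) 1
  simp only [pow_one] at hS
  simp only [map_sub, map_add, map_mul, map_pow, map_natCast, map_ofNat, hS] at h
  rw [show (p - 1) / 2 = p / 2 by have := hp.eq_one_or_self_of_dvd 2; omega]
  linear_combination h
end

section
/- Let p be a prime with p > 3 and q = (2^(p-1) - 1)/p. Then in ZMod p, 4·S_00 = 2·q^2, where S_00 is the sum of 1/(ij) over pairs 0 < i < j < p with both i and j even. -/
open Finset

/-- Square of a sum, split into diagonal and strictly-upper part. -/
lemma sq_sum_split {R : Type*} [CommRing R] (s : Finset ℕ) (f : ℕ → R) :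
    (∑ i ∈ s, f i) * (∑ i ∈ s, f i) =
      ∑ i ∈ s, f i * f i +
        2 * ∑ i ∈ s, ∑ j ∈ s.filter (fun j => i < j), f i * f j := by
  rw [Finset.sum_mul_sum]
  have hsplit : ∀ i ∈ s, ∑ j ∈ s, f i * f j =
      (∑ j ∈ s.filter (fun j => j < i), f i * f j) +
      (f i * f i + ∑ j ∈ s.filter (fun j => i < j), f i * f j) := by
    intro i hi
    rw [← Finset.sum_filter_add_sum_filter_not s (fun j => j < i)]
    congr 1
    have hins : s.filter (fun j => ¬ j < i) = insert i (s.filter (fun j => i < j)) := by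
      ext j
      simp only [Finset.mem_filter, Finset.mem_insert, not_lt]
      constructor
      · rintro ⟨hj, hij⟩
        rcases Nat.lt_or_ge i j with h | h
        · exact Or.inr ⟨hj, h⟩
        · exact Or.inl (by omega)
      · rintro (rfl | ⟨hj, hij⟩)
        · exact ⟨hi, le_rfl⟩
        · exact ⟨hj, hij.le⟩
    rw [hins, Finset.sum_insert (by simp)]
  rw [Finset.sum_congr rfl hsplit, Finset.sum_add_distrib, Finset.sum_add_distrib]
  have hswap : ∑ i ∈ s, ∑ j ∈ s.filter (fun j => j < i), f i * f j =
      ∑ i ∈ s, ∑ j ∈ s.filter (fun j => i < j), f i * f j := by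
    rw [Finset.sum_comm' (s := s) (t := fun i => s.filter (fun j => j < i)) (t' := s)
      (s' := fun j => s.filter (fun i => j < i))
      (by intro x y; simp only [Finset.mem_filter]; tauto)]
    apply Finset.sum_congr rfl
    intro i _
    apply Finset.sum_congr rfl
    intro j _
    exact mul_comm _ _
  rw [hswap]; ring

theorem four_S00_eq_two_q_sq (p : ℕ) (hp : p.Prime) (hp3 : 3 < p) :
    4 * (∑ i ∈ (Finset.Ioo 0 p).filter (fun i => Even i),
          ∑ j ∈ (Finset.Ioo i p).filter (fun j => Even j),
            ((i : ZMod p) * (j : ZMod p))⁻¹)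
      = 2 * (((2 ^ (p - 1) - 1) / p : ℕ) : ZMod p) ^ 2 := by
  haveI : Fact p.Prime := ⟨hp⟩
  have hp0 : 0 < p := by omega
  have hp4 : p ≠ 4 := by rintro rfl; norm_num at hp
  have hpodd : Odd p := hp.odd_of_ne_two (by omega)
  have h2 : (2 : ZMod p) ≠ 0 := by
    intro h
    have h' : ((2 : ℕ) : ZMod p) = 0 := by exact_mod_cast h
    rw [ZMod.natCast_eq_zero_iff] at h'
    have := Nat.le_of_dvd (by norm_num) h'
    omega
  -- sums over Ioo 0 p of a function of the cast equal sums over all of ZMod p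
  have cast_sum : ∀ g : ZMod p → ZMod p, g 0 = 0 →
      ∑ i ∈ Finset.Ioo 0 p, g (i : ZMod p) = ∑ x : ZMod p, g x := by
    intro g hg
    have h1 : ∑ i ∈ Finset.range p, g (i : ZMod p) = ∑ x : ZMod p, g x := by
      refine Finset.sum_nbij' (fun i => ((i : ZMod p))) (fun x => x.val)
        (fun a _ => Finset.mem_univ _)
        (fun x _ => Finset.mem_range.mpr (ZMod.val_lt x))
        (fun a ha => ZMod.val_cast_of_lt (Finset.mem_range.mp ha))
        (fun x _ => ZMod.natCast_rightInverse x)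
        (fun a _ => rfl)
    have h2' : Finset.range p = insert 0 (Finset.Ioo 0 p) := by
      ext i
      simp only [Finset.mem_range, Finset.mem_insert, Finset.mem_Ioo]
      omega
    rw [h2', Finset.sum_insert (by simp)] at h1
    simpa [hg] using h1
  have hpow : ∀ n, n < p - 1 → ∑ x : ZMod p, x ^ n = 0 := by
    intro n hn
    exact FiniteField.sum_pow_lt_card_sub_one (ZMod p) n (by rwa [ZMod.card])
  have inv_sum : ∀ g : ZMod p → ZMod p, ∑ x : ZMod p, g x⁻¹ = ∑ x : ZMod p, g x :=
    fun g => Fintype.sum_bijective (fun x : ZMod p => x⁻¹)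
      (Function.Involutive.bijective inv_involutive) _ _ (fun x => rfl)
  have hS1 : ∑ i ∈ Finset.Ioo 0 p, ((i : ZMod p))⁻¹ = 0 := by
    rw [cast_sum (fun x => x⁻¹) inv_zero]
    calc ∑ x : ZMod p, x⁻¹ = ∑ x : ZMod p, x := inv_sum (fun x => x)
    _ = ∑ x : ZMod p, x ^ 1 := by simp
    _ = 0 := hpow 1 (by omega)
  have hS2 : ∑ i ∈ Finset.Ioo 0 p, ((i : ZMod p))⁻¹ ^ 2 = 0 := by
    rw [cast_sum (fun x => x⁻¹ ^ 2) (by simp)]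
    calc ∑ x : ZMod p, x⁻¹ ^ 2 = ∑ x : ZMod p, x ^ 2 := inv_sum (fun x => x ^ 2)
    _ = 0 := hpow 2 (by omega)
  set E := (Finset.Ioo 0 p).filter (fun i => Even i) with hE
  set T := ∑ i ∈ E, ((i : ZMod p))⁻¹ with hT
  set Q := ∑ i ∈ E, ((i : ZMod p))⁻¹ ^ 2 with hQ
  -- sum over odds of inverses is -T, of inverse squares is Q
  have hOsum : ∑ i ∈ (Finset.Ioo 0 p).filter (fun i => ¬ Even i), ((i : ZMod p))⁻¹ = -T := by
    have := Finset.sum_filter_add_sum_filter_not (Finset.Ioo 0 p) (fun i => Even i)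
      (fun i => ((i : ZMod p))⁻¹)
    rw [hS1] at this
    rw [← hE] at this
    linear_combination this
  have hOsq : ∑ i ∈ (Finset.Ioo 0 p).filter (fun i => ¬ Even i), ((i : ZMod p))⁻¹ ^ 2
      = ∑ i ∈ (Finset.Ioo 0 p).filter (fun i => Even i), ((i : ZMod p))⁻¹ ^ 2 := by
    refine Finset.sum_nbij' (fun i => p - i) (fun i => p - i) ?_ ?_ ?_ ?_ ?_
    · intro a ha
      simp only [Finset.mem_filter, Finset.mem_Ioo] at ha ⊢
      refine ⟨⟨by omega, by omega⟩, ?_⟩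
      exact Nat.Odd.sub_odd hpodd (Nat.not_even_iff_odd.mp ha.2)
    · intro a ha
      simp only [Finset.mem_filter, Finset.mem_Ioo] at ha ⊢
      have hodd : Odd (p - a) := Nat.Odd.sub_even (by omega) hpodd ha.2
      exact ⟨⟨by omega, by omega⟩, Nat.not_even_iff_odd.mpr hodd⟩
    · intro a ha
      simp only [Finset.mem_filter, Finset.mem_Ioo] at ha
      show p - (p - a) = a
      omega
    · intro a ha
      simp only [Finset.mem_filter, Finset.mem_Ioo] at ha
      show p - (p - a) = a
      omega
    · intro a ha
      simp only [Finset.mem_filter, Finset.mem_Ioo] at ha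
      have hc : ((p - a : ℕ) : ZMod p) = -(a : ZMod p) := by
        rw [Nat.cast_sub ha.1.2.le, ZMod.natCast_self, zero_sub]
      rw [hc, inv_neg, neg_sq]
  have hQ0 : Q = 0 := by
    have hsplit := Finset.sum_filter_add_sum_filter_not (Finset.Ioo 0 p) (fun i => Even i)
      (fun i => ((i : ZMod p))⁻¹ ^ 2)
    rw [hS2, hOsq, ← hE, ← hQ] at hsplit
    have h22 : (2 : ZMod p) * Q = 0 := by linear_combination hsplit
    rcases mul_eq_zero.mp h22 with h | h
    · exact absurd h h2
    · exact h
  -- binomial coefficients of p-1 alternate mod p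
  have hC : ∀ k, k < p → (((p - 1).choose k : ℕ) : ZMod p) = (-1) ^ k := by
    intro k
    induction k with
    | zero => simp
    | succ n ih =>
      intro hn
      have hpas : (p - 1).choose n + (p - 1).choose (n + 1) = p.choose (n + 1) := by
        have h := Nat.choose_succ_succ (p - 1) n
        have e : p - 1 + 1 = p := by omega
        simp only [Nat.succ_eq_add_one] at h
        rw [e] at h
        omega
      have hz : ((p.choose (n + 1) : ℕ) : ZMod p) = 0 := by
        rw [ZMod.natCast_eq_zero_iff]
        exact hp.dvd_choose_self (Nat.succ_ne_zero n) hn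
      have hcast : (((p - 1).choose n : ℕ) : ZMod p) + (((p - 1).choose (n + 1) : ℕ) : ZMod p)
          = 0 := by
        rw [← Nat.cast_add, hpas, hz]
      rw [ih (by omega)] at hcast
      rw [pow_succ]
      linear_combination hcast
  -- Fermat quotient basics
  have hle1 : 1 ≤ 2 ^ (p - 1) := Nat.one_le_two_pow
  have hdvd : p ∣ 2 ^ (p - 1) - 1 := by
    have h1 : ((2 : ZMod p)) ^ (p - 1) = 1 := ZMod.pow_card_sub_one_eq_one h2
    have hz : ((2 ^ (p - 1) - 1 : ℕ) : ZMod p) = 0 := by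
      rw [Nat.cast_sub hle1]
      push_cast
      rw [h1]
      ring
    exact (ZMod.natCast_eq_zero_iff _ _).mp hz
  set q : ℕ := (2 ^ (p - 1) - 1) / p with hq
  have hpq : p * q = 2 ^ (p - 1) - 1 := Nat.mul_div_cancel' hdvd
  -- the sum of Fermat-quotient terms of binomial coefficients
  have hchoose_sum : ∑ k ∈ Finset.Ioo 0 p, p.choose k = 2 ^ p - 2 := by
    have hsum := Nat.sum_range_choose p
    have e1 : ∑ i ∈ Finset.range (p + 1), p.choose i
        = (∑ i ∈ Finset.range p, p.choose i) + 1 := by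
      rw [Finset.sum_range_succ, Nat.choose_self]
    have h2' : Finset.range p = insert 0 (Finset.Ioo 0 p) := by
      ext i
      simp only [Finset.mem_range, Finset.mem_insert, Finset.mem_Ioo]
      omega
    have e2 : ∑ i ∈ Finset.range p, p.choose i
        = 1 + ∑ k ∈ Finset.Ioo 0 p, p.choose k := by
      rw [h2', Finset.sum_insert (by simp), Nat.choose_zero_right]
    omega
  have hM : p * (∑ k ∈ Finset.Ioo 0 p, p.choose k / p) = 2 ^ p - 2 := by
    have hterm : ∀ k ∈ Finset.Ioo 0 p, p * (p.choose k / p) = p.choose k := by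
      intro k hk
      simp only [Finset.mem_Ioo] at hk
      exact Nat.mul_div_cancel' (hp.dvd_choose_self (by omega) hk.2)
    exact (Finset.mul_sum _ _ _).trans ((Finset.sum_congr rfl hterm).trans hchoose_sum)
  have hM2 : (∑ k ∈ Finset.Ioo 0 p, p.choose k / p) = 2 * q := by
    have h1 : p * (2 * q) = 2 ^ p - 2 := by
      have hpow2 : 2 ^ p = 2 * 2 ^ (p - 1) := by
        rw [← pow_succ']
        congr 1
        omega
      calc p * (2 * q) = 2 * (p * q) := by ring
      _ = 2 * (2 ^ (p - 1) - 1) := by rw [hpq]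
      _ = 2 ^ p - 2 := by omega
    exact Nat.eq_of_mul_eq_mul_left hp0 (by rw [hM, h1])
  -- each binomial Fermat-quotient term mod p
  have hterm : ∀ k ∈ Finset.Ioo 0 p,
      ((p.choose k / p : ℕ) : ZMod p) = (-1) ^ (k - 1) * ((k : ZMod p))⁻¹ := by
    intro k hk
    simp only [Finset.mem_Ioo] at hk
    have hknz : (k : ZMod p) ≠ 0 := by
      rw [Ne, ZMod.natCast_eq_zero_iff]
      intro hd
      have := Nat.le_of_dvd hk.1 hd
      omega
    have h1 : p * ((p - 1).choose (k - 1)) = p.choose k * k := by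
      have h := Nat.add_one_mul_choose_eq (p - 1) (k - 1)
      have e1 : p - 1 + 1 = p := by omega
      have e2 : k - 1 + 1 = k := by omega
      rw [e1, e2] at h
      exact h
    have hdc : p ∣ p.choose k := hp.dvd_choose_self (by omega) hk.2
    have h3 : (p - 1).choose (k - 1) = (p.choose k / p) * k := by
      apply Nat.eq_of_mul_eq_mul_left hp0
      rw [h1, ← mul_assoc, Nat.mul_div_cancel' hdc]
    have h4 : (((p - 1).choose (k - 1) : ℕ) : ZMod p) = (-1) ^ (k - 1) :=
      hC (k - 1) (by omega)
    have h5 : ((p.choose k / p : ℕ) : ZMod p) * (k : ZMod p) = (-1) ^ (k - 1) := by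
      rw [← Nat.cast_mul, ← h3, h4]
    field_simp at h5 ⊢
    linear_combination h5
  -- hence 2q = -2T
  have hA : (2 : ZMod p) * (q : ZMod p) = -(2 * T) := by
    have hcast : ((∑ k ∈ Finset.Ioo 0 p, p.choose k / p : ℕ) : ZMod p)
        = ∑ k ∈ Finset.Ioo 0 p, (-1 : ZMod p) ^ (k - 1) * ((k : ZMod p))⁻¹ := by
      rw [Nat.cast_sum]
      exact Finset.sum_congr rfl hterm
    rw [hM2] at hcast
    push_cast at hcast
    -- now split the alternating sum by parity
    have hsplit := Finset.sum_filter_add_sum_filter_not (Finset.Ioo 0 p) (fun i => Even i)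
      (fun k => (-1 : ZMod p) ^ (k - 1) * ((k : ZMod p))⁻¹)
    have hEv : ∑ k ∈ E, (-1 : ZMod p) ^ (k - 1) * ((k : ZMod p))⁻¹ = -T := by
      rw [hT, ← Finset.sum_neg_distrib]
      apply Finset.sum_congr rfl
      intro k hk
      simp only [hE, Finset.mem_filter, Finset.mem_Ioo] at hk
      have hodd : Odd (k - 1) := Nat.Even.sub_odd (by omega) hk.2 odd_one
      rw [hodd.neg_one_pow]
      ring
    have hOd : ∑ k ∈ (Finset.Ioo 0 p).filter (fun i => ¬ Even i),
        (-1 : ZMod p) ^ (k - 1) * ((k : ZMod p))⁻¹ = -T := by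
      rw [← hOsum]
      apply Finset.sum_congr rfl
      intro k hk
      simp only [Finset.mem_filter, Finset.mem_Ioo] at hk
      have hev : Even (k - 1) :=
        Nat.Odd.sub_odd (Nat.not_even_iff_odd.mp hk.2) odd_one
      rw [hev.neg_one_pow, one_mul]
    rw [← hE, hEv, hOd] at hsplit
    rw [hcast, ← hsplit]
    ring
  have hTq : T = -(q : ZMod p) := by
    have h22 : (2 : ZMod p) * (T + (q : ZMod p)) = 0 := by linear_combination hA
    rcases mul_eq_zero.mp h22 with h | h
    · exact absurd h h2
    · linear_combination h
  -- rewrite the goal's inner sums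
  have hinner : ∀ i ∈ E,
      ∑ j ∈ (Finset.Ioo i p).filter (fun j => Even j), ((i : ZMod p) * (j : ZMod p))⁻¹
      = ∑ j ∈ E.filter (fun j => i < j), ((i : ZMod p))⁻¹ * ((j : ZMod p))⁻¹ := by
    intro i hi
    simp only [hE, Finset.mem_filter, Finset.mem_Ioo] at hi
    have hset : (Finset.Ioo i p).filter (fun j => Even j)
        = E.filter (fun j => i < j) := by
      ext j
      simp only [hE, Finset.mem_filter, Finset.mem_Ioo]
      constructor
      · rintro ⟨⟨h1, h2⟩, h3⟩
        exact ⟨⟨⟨by omega, h2⟩, h3⟩, h1⟩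
      · rintro ⟨⟨⟨h1, h2⟩, h3⟩, h4⟩
        exact ⟨⟨h4, h2⟩, h3⟩
    rw [hset]
    apply Finset.sum_congr rfl
    intro j _
    rw [mul_inv]
  rw [Finset.sum_congr rfl hinner]
  have hsq := sq_sum_split E (fun i => ((i : ZMod p))⁻¹)
  rw [← hT] at hsq
  have hQ' : ∑ i ∈ E, ((i : ZMod p))⁻¹ * ((i : ZMod p))⁻¹ = 0 := by
    rw [← hQ0, hQ]
    apply Finset.sum_congr rfl
    intro i _
    rw [sq]
  rw [hQ'] at hsq
  rw [hTq] at hsq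
  -- hsq : (-q) * (-q) = 0 + 2 * S00'
  linear_combination (-2) * hsq
end

section
/- Let p be a prime with p > 3 and q = (2^(p-1) - 1)/p. Then in ZMod p^2, S_0 = -S_1 = -q + (1/2)·p·q^2, where S_0 is the sum of inverses of the even integers i with 0 < i < p, S_1 is the sum of inverses of the odd integers i with 0 < i < p, and 1/2 is the inverse of 2 in ZMod p^2. -/
open Finset Nat


lemma prod_expand {R : Type*} [CommRing R] (π : R) (hπ : π^3 = 0) (s : Finset ℕ) (x : ℕ → R) :
    2 * ∏ i ∈ s, (1 - π * x i)
      = 2 - 2*π*(∑ i ∈ s, x i) + π^2 * ((∑ i ∈ s, x i)^2 - ∑ i ∈ s, (x i)^2) := by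
  induction s using Finset.cons_induction with
  | empty => simp
  | cons a s ha ih =>
    rw [Finset.prod_cons, Finset.sum_cons, Finset.sum_cons]
    linear_combination (1 - π * x a) * ih
      - (x a) * ((∑ i ∈ s, x i)^2 - ∑ i ∈ s, (x i)^2) * hπ


lemma fact_interleave (m : ℕ) :
    Nat.factorial (2*m) = 2^m * Nat.factorial m * ∏ j ∈ range m, (2*j+1) := by
  induction m with
  | zero => simp
  | succ m ih =>
    rw [Finset.prod_range_succ]
    have h1 : 2*(m+1) = (2*m+1) + 1 := by ring
    rw [h1, Nat.factorial_succ, Nat.factorial_succ, ih, Nat.factorial_succ]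
    ring

lemma prod_shift (m : ℕ) : ∏ i ∈ Icc 1 m, (2*m+1 - i) = ∏ k ∈ Icc (m+1) (2*m), k := by
  refine Finset.prod_nbij' (fun i => 2*m+1-i) (fun k => 2*m+1-k) ?_ ?_ ?_ ?_ ?_ <;>
      intro a ha <;> simp only [Finset.mem_Icc] at * <;> omega

lemma prod_odds (m : ℕ) : ∏ i ∈ Icc 1 m, (2*m+1 - 2*i) = ∏ j ∈ range m, (2*j+1) := by
  refine Finset.prod_nbij' (fun i => m - i) (fun j => m - j) ?_ ?_ ?_ ?_ ?_ <;>
      intro a ha <;> simp only [Finset.mem_Icc, Finset.mem_range] at * <;> omega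

lemma nat_prod_identity (m : ℕ) :
    ∏ i ∈ Icc 1 m, (2*m+1 - i) = 2^m * ∏ i ∈ Icc 1 m, (2*m+1 - 2*i) := by
  have key : Nat.factorial m * ∏ i ∈ Icc 1 m, (2*m+1 - i)
      = Nat.factorial m * (2^m * ∏ i ∈ Icc 1 m, (2*m+1 - 2*i)) := by
    rw [prod_shift, prod_odds]
    have h3 : ∀ n : ℕ, ∏ k ∈ Ioc 0 n, k = Nat.factorial n := by
      intro n
      have : Ioc 0 n = Ico 1 (n+1) := by ext; simp; omega
      rw [this]
      exact Finset.prod_Ico_id_eq_factorial n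
    have h1 : Nat.factorial m * ∏ k ∈ Icc (m+1) (2*m), k = Nat.factorial (2*m) := by
      have h2 : (∏ k ∈ Ioc 0 m, k) * ∏ k ∈ Ioc m (2*m), k = ∏ k ∈ Ioc 0 (2*m), k :=
        Finset.prod_Ioc_consecutive _ (by omega) (by omega)
      have h4 : Icc (m+1) (2*m) = Ioc m (2*m) := by ext; simp
      rw [h4, ← h3 m, ← h3 (2*m)]; exact h2
    rw [h1, fact_interleave]; ring
  exact Nat.eq_of_mul_eq_mul_left (Nat.factorial_pos m) key


lemma inv_eq_of_mul_nat {n : ℕ} (a : ℕ) (h : a.Coprime n) (y : ZMod n)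
    (hy : (a : ZMod n) * y = 1) : (a : ZMod n)⁻¹ = y := by
  have h1 : (a : ZMod n) * (a : ZMod n)⁻¹ = 1 := ZMod.coe_mul_inv_eq_one a h
  calc (a : ZMod n)⁻¹ = (a : ZMod n)⁻¹ * ((a : ZMod n) * y) := by rw [hy, mul_one]
    _ = ((a : ZMod n) * (a : ZMod n)⁻¹) * y := by ring
    _ = y := by rw [h1, one_mul]

lemma cast_inv {n m : ℕ} [NeZero n] [NeZero m] (h : m ∣ n) (a : ℕ) (ha : a.Coprime n) :
    ZMod.castHom h (ZMod m) ((a : ZMod n)⁻¹) = ((a : ZMod m))⁻¹ := by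
  have h1 : (a : ZMod n) * (a : ZMod n)⁻¹ = 1 := ZMod.coe_mul_inv_eq_one a ha
  have h2 := congrArg (ZMod.castHom h (ZMod m)) h1
  rw [map_mul, map_one, map_natCast] at h2
  exact (inv_eq_of_mul_nat a (Nat.Coprime.coprime_dvd_right h ha) _ h2).symm

-- p * x = 0 in ZMod p^3 → cast x = 0 in ZMod p^2
lemma pmul_zero_down {p : ℕ} (hp : 0 < p) (x : ZMod (p^3)) (h : (p : ZMod (p^3)) * x = 0) :
    ZMod.castHom (show p^2 ∣ p^3 by exact pow_dvd_pow p (by norm_num)) (ZMod (p^2)) x = 0 := by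
  have : NeZero (p^3) := ⟨by positivity⟩
  have hx : ((p * x.val : ℕ) : ZMod (p^3)) = 0 := by
    push_cast
    rw [ZMod.natCast_val, ZMod.cast_id, h]
  rw [ZMod.natCast_eq_zero_iff] at hx
  have hdvd : p^2 ∣ x.val := by
    obtain ⟨k, hk⟩ := hx
    refine ⟨k, Nat.eq_of_mul_eq_mul_left hp ?_⟩
    rw [hk]; ring
  rw [ZMod.castHom_apply, ← ZMod.natCast_val]
  exact (ZMod.natCast_eq_zero_iff _ _).mpr hdvd

-- cast x = 0 in ZMod p → p * x = 0 in ZMod p^2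
lemma pmul_zero_up {p : ℕ} (hp : 0 < p) (x : ZMod (p^2)) 
    (h : ZMod.castHom (show p ∣ p^2 by exact dvd_pow_self p (by norm_num)) (ZMod p) x = 0) :
    (p : ZMod (p^2)) * x = 0 := by
  have : NeZero (p^2) := ⟨by positivity⟩
  rw [ZMod.castHom_apply, ← ZMod.natCast_val, ZMod.natCast_eq_zero_iff] at h
  have hx : x = ((x.val : ℕ) : ZMod (p^2)) := by rw [ZMod.natCast_val, ZMod.cast_id]
  rw [hx, ← Nat.cast_mul, ZMod.natCast_eq_zero_iff]
  obtain ⟨k, hk⟩ := h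
  exact ⟨k, by rw [hk]; ring⟩


lemma natCast_ne_zero_zmod {p : ℕ} (hp : p.Prime) (a : ℕ) (ha : 0 < a) (hap : a < p) :
    ((a : ℕ) : ZMod p) ≠ 0 := by
  haveI : NeZero p := ⟨hp.ne_zero⟩
  rw [Ne, ZMod.natCast_eq_zero_iff]
  intro h
  have := Nat.le_of_dvd ha h
  omega

lemma sum_univ_sq_zero {p : ℕ} [NeZero p] (hp : p.Prime) (hp3 : 3 < p) : ∑ x : ZMod p, x^2 = 0 := by
  haveI : Fact p.Prime := ⟨hp⟩
  have h3 : (3 : ZMod p) ≠ 0 := by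
    have := natCast_ne_zero_zmod hp 3 (by norm_num) hp3
    exact_mod_cast this
  have h2u : (2 : ZMod p) ≠ 0 := by
    have := natCast_ne_zero_zmod hp 2 (by norm_num) (by omega)
    exact_mod_cast this
  have hbij : Function.Bijective (fun x : ZMod p => 2 * x) := by
    constructor
    · intro a b hab
      exact mul_left_cancel₀ h2u hab
    · intro y
      exact ⟨2⁻¹ * y, by field_simp⟩
  have key : ∑ x : ZMod p, x^2 = ∑ x : ZMod p, (2*x)^2 :=
    (Fintype.sum_bijective _ hbij _ _ (fun x => rfl)).symm
  have key2 : ∑ x : ZMod p, (2*x)^2 = 4 * ∑ x : ZMod p, x^2 := by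
    rw [Finset.mul_sum]
    apply Finset.sum_congr rfl
    intros; ring
  have h33 : (3 : ZMod p) * ∑ x : ZMod p, x^2 = 0 := by
    linear_combination - key - key2
  exact (mul_eq_zero.mp h33).resolve_left h3

lemma sum_range_to_univ {p : ℕ} [NeZero p] (f : ZMod p → ZMod p) :
    ∑ i ∈ Finset.range p, f (i : ZMod p) = ∑ x : ZMod p, f x := by
  refine Finset.sum_nbij' (fun i => (i : ZMod p)) (fun x => x.val) ?_ ?_ ?_ ?_ ?_
  · intro a _; exact Finset.mem_univ _
  · intro x _; exact Finset.mem_range.mpr (ZMod.val_lt x)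
  · intro a ha; exact ZMod.val_cast_of_lt (Finset.mem_range.mp ha)
  · intro x _; exact ZMod.natCast_rightInverse x
  · intro a _; rfl

lemma sum_Ioo_invsq_zero {p : ℕ} (hp : p.Prime) (hp3 : 3 < p) :
    ∑ i ∈ Finset.Ioo 0 p, (((i : ZMod p))⁻¹)^2 = 0 := by
  haveI : Fact p.Prime := ⟨hp⟩
  haveI : NeZero p := ⟨hp.ne_zero⟩
  have h1 : ∑ i ∈ Finset.range p, (((i : ZMod p))⁻¹)^2 = ∑ x : ZMod p, (x⁻¹)^2 :=
    sum_range_to_univ (fun x => (x⁻¹)^2)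
  have h2 : ∑ x : ZMod p, (x⁻¹)^2 = ∑ x : ZMod p, x^2 :=
    Fintype.sum_bijective (fun x : ZMod p => x⁻¹) inv_involutive.bijective _ _ (fun x => rfl)
  have h0 : Finset.range p = insert 0 (Finset.Ioo 0 p) := by
    ext i; simp [Finset.mem_range, Finset.mem_Ioo]; omega
  rw [h0, Finset.sum_insert (by simp), h2, sum_univ_sq_zero hp hp3] at h1
  simpa using h1

lemma sum_Icc_invsq_zero {p : ℕ} (hp : p.Prime) (hp3 : 3 < p) (m : ℕ) (hm : p = 2*m+1) :
    ∑ i ∈ Finset.Icc 1 m, (((i : ZMod p))⁻¹)^2 = 0 := by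
  haveI : Fact p.Prime := ⟨hp⟩
  haveI : NeZero p := ⟨hp.ne_zero⟩
  have hsplit : Finset.Ioo 0 p = Finset.Icc 1 m ∪ Finset.Icc (m+1) (2*m) := by
    ext i; simp [Finset.mem_Ioo, Finset.mem_Icc]; omega
  have hdisj : Disjoint (Finset.Icc 1 m) (Finset.Icc (m+1) (2*m)) := by
    rw [Finset.disjoint_left]; intro a ha hb
    simp [Finset.mem_Icc] at ha hb; omega
  have hsecond : ∑ i ∈ Finset.Icc (m+1) (2*m), (((i : ZMod p))⁻¹)^2
      = ∑ i ∈ Finset.Icc 1 m, (((i : ZMod p))⁻¹)^2 := by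
    refine Finset.sum_nbij' (fun i => p - i) (fun i => p - i) ?_ ?_ ?_ ?_ ?_ <;>
        intro a ha <;> simp only [Finset.mem_Icc] at *
    · omega
    · omega
    · omega
    · omega
    · have hcast : ((p - a : ℕ) : ZMod p) = - (a : ZMod p) := by
        have hle : a ≤ p := by omega
        have : ((p - a : ℕ) : ZMod p) = (p : ZMod p) - (a : ZMod p) := by
          push_cast [Nat.cast_sub hle]; ring
        rw [this, ZMod.natCast_self, zero_sub]
      rw [hcast, inv_neg, neg_sq]
  have := sum_Ioo_invsq_zero hp hp3
  rw [hsplit, Finset.sum_union hdisj, hsecond] at this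
  have h2 : (2 : ZMod p) ≠ 0 := by
    have := natCast_ne_zero_zmod hp 2 (by norm_num) (by omega)
    exact_mod_cast this
  have : (2 : ZMod p) * ∑ i ∈ Finset.Icc 1 m, (((i : ZMod p))⁻¹)^2 = 0 := by
    linear_combination this
  exact (mul_eq_zero.mp this).resolve_left h2

lemma S2_val {p : ℕ} (hp : p.Prime) (hp3 : 3 < p) (m : ℕ) (hm : p = 2*m+1) :
    ∑ i ∈ Finset.Icc 1 m, ((i : ZMod (p^2)))⁻¹
      = -2 * (((2^(p-1)-1)/p : ℕ) : ZMod (p^2))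
        + (p : ZMod (p^2)) * (((2^(p-1)-1)/p : ℕ) : ZMod (p^2))^2 := by
  haveI : Fact p.Prime := ⟨hp⟩
  haveI : NeZero p := ⟨hp.ne_zero⟩
  haveI : NeZero (p^2) := ⟨by positivity⟩
  haveI : NeZero (p^3) := ⟨by positivity⟩
  have hppos : 0 < p := by omega
  -- coprimality helpers
  have hndvd : ∀ i : ℕ, 0 < i → ¬ (p ∣ i) → True := fun _ _ _ => trivial
  have hcop : ∀ (a : ℕ), ¬ (p ∣ a) → ∀ k : ℕ, a.Coprime (p^k) := by
    intro a ha k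
    exact Nat.Coprime.pow_right k (Nat.coprime_comm.mp ((Nat.Prime.coprime_iff_not_dvd hp).mpr ha))
  have hndvd_lt : ∀ i : ℕ, 0 < i → i < p → ¬ (p ∣ i) := by
    intro i h1 h2 hd
    have := Nat.le_of_dvd h1 hd
    omega
  have hndvd2 : ¬ (p ∣ 2) := hndvd_lt 2 (by norm_num) (by omega)
  have hcop_i : ∀ i ∈ Finset.Icc 1 m, ∀ k : ℕ, (i : ℕ).Coprime (p^k) := by
    intro i hi k
    rw [Finset.mem_Icc] at hi
    exact hcop i (hndvd_lt i (by omega) (by omega)) k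
  -- Fermat quotient
  have hone : 1 ≤ 2^(p-1) := Nat.one_le_two_pow
  have hdvd : p ∣ 2^(p-1) - 1 := by
    have h2nz : (2 : ZMod p) ≠ 0 := by
      have : ((2:ℕ) : ZMod p) ≠ 0 := by
        rw [Ne, ZMod.natCast_eq_zero_iff]; exact hndvd2
      exact_mod_cast this
    have hfer : (2 : ZMod p)^(p-1) = 1 := ZMod.pow_card_sub_one_eq_one h2nz
    rw [← ZMod.natCast_eq_zero_iff]
    rw [Nat.cast_sub hone]
    push_cast
    rw [hfer]
    ring
  have hq : p * ((2^(p-1)-1)/p) = 2^(p-1) - 1 := Nat.mul_div_cancel' hdvd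
  set qn : ℕ := (2^(p-1)-1)/p with hqn
  have hpow : 2^(p-1) = 1 + p*qn := by omega
  -- R3 story
  set c3 : ZMod (p^3) := ((2:ℕ) : ZMod (p^3))⁻¹ with hc3def
  have hc3 : ((2:ℕ) : ZMod (p^3)) * c3 = 1 := ZMod.coe_mul_inv_eq_one 2 (hcop 2 hndvd2 3)
  have hinv3 : ∀ i ∈ Finset.Icc 1 m, ((i:ℕ) : ZMod (p^3)) * ((i:ℕ) : ZMod (p^3))⁻¹ = 1 :=
    fun i hi => ZMod.coe_mul_inv_eq_one i (hcop_i i hi 3)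
  have hπ3 : ((p : ZMod (p^3)))^3 = 0 := by
    rw [← Nat.cast_pow]
    exact ZMod.natCast_self (p^3)
  have hid : ∏ i ∈ Finset.Icc 1 m, ((p - i : ℕ) : ZMod (p^3))
      = ((2:ZMod (p^3))^m) * ∏ i ∈ Finset.Icc 1 m, ((p - 2*i : ℕ) : ZMod (p^3)) := by
    have h0 := nat_prod_identity m
    rw [show 2*m+1 = p by omega] at h0
    have := congrArg (fun n : ℕ => (n : ZMod (p^3))) h0
    push_cast at this
    exact_mod_cast this
  have hL : ∀ i ∈ Finset.Icc 1 m, ((p - i : ℕ) : ZMod (p^3))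
      = (-1) * (i : ZMod (p^3)) * (1 - (p : ZMod (p^3)) * ((i:ℕ) : ZMod (p^3))⁻¹) := by
    intro i hi
    have hb := Finset.mem_Icc.mp hi
    rw [Nat.cast_sub (by omega : i ≤ p)]
    linear_combination (-(p : ZMod (p^3))) * hinv3 i hi
  have hR : ∀ i ∈ Finset.Icc 1 m, ((p - 2*i : ℕ) : ZMod (p^3))
      = (-1) * (2 * (i : ZMod (p^3))) * (1 - (p : ZMod (p^3)) * (c3 * ((i:ℕ) : ZMod (p^3))⁻¹)) := by
    intro i hi
    have hb := Finset.mem_Icc.mp hi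
    rw [Nat.cast_sub (by omega : 2*i ≤ p)]
    push_cast
    linear_combination (-2*(p : ZMod (p^3))*c3) * hinv3 i hi - (p : ZMod (p^3)) * hc3
  set M : ZMod (p^3) := ∏ i ∈ Finset.Icc 1 m, ((i:ℕ) : ZMod (p^3)) with hM
  set M' : ZMod (p^3) := ∏ i ∈ Finset.Icc 1 m, ((i:ℕ) : ZMod (p^3))⁻¹ with hM'
  set P₁ : ZMod (p^3) := ∏ i ∈ Finset.Icc 1 m, (1 - (p : ZMod (p^3)) * ((i:ℕ) : ZMod (p^3))⁻¹) with hP₁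
  set P₂ : ZMod (p^3) :=
    ∏ i ∈ Finset.Icc 1 m, (1 - (p : ZMod (p^3)) * (c3 * ((i:ℕ) : ZMod (p^3))⁻¹)) with hP₂
  have hcard : (Finset.Icc 1 m).card = m := by rw [Nat.card_Icc]; omega
  have hMM : M * M' = 1 := by
    rw [hM, hM', ← Finset.prod_mul_distrib]
    rw [Finset.prod_congr rfl hinv3]
    exact Finset.prod_const_one
  have hidL : ∏ i ∈ Finset.Icc 1 m, ((p - i : ℕ) : ZMod (p^3)) = (-1)^m * M * P₁ := by
    rw [Finset.prod_congr rfl hL, Finset.prod_mul_distrib, Finset.prod_mul_distrib,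
      Finset.prod_const, hcard]
  have hidR : ∏ i ∈ Finset.Icc 1 m, ((p - 2*i : ℕ) : ZMod (p^3))
      = (-1)^m * (2^m * M) * P₂ := by
    rw [Finset.prod_congr rfl hR, Finset.prod_mul_distrib, Finset.prod_mul_distrib,
      Finset.prod_mul_distrib, Finset.prod_const, Finset.prod_const, hcard]
    try ring
  have hEE : (-1:ZMod (p^3))^m * M * P₁ = (2:ZMod (p^3))^m * ((-1)^m * (2^m * M) * P₂) := by
    rw [← hidL, ← hidR, hid]
  have hneg1 : (-1:ZMod (p^3))^m * (-1:ZMod (p^3))^m = 1 := by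
    rw [← pow_add]
    exact Even.neg_one_pow ⟨m, rfl⟩
  have hcancel : P₁ = (2:ZMod (p^3))^(2*m) * P₂ := by
    calc P₁ = ((-1:ZMod (p^3))^m * (-1:ZMod (p^3))^m) * (M * M') * P₁ := by
            rw [hneg1, hMM]; ring
      _ = ((-1:ZMod (p^3))^m * M') * ((-1:ZMod (p^3))^m * M * P₁) := by ring
      _ = ((-1:ZMod (p^3))^m * M') * ((2:ZMod (p^3))^m * ((-1)^m * (2^m * M) * P₂)) := by
            rw [hEE]
      _ = ((-1:ZMod (p^3))^m * (-1:ZMod (p^3))^m) * (M * M') * ((2:ZMod (p^3))^m * 2^m * P₂) := by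
            ring
      _ = (2:ZMod (p^3))^(2*m) * P₂ := by rw [hneg1, hMM, ← pow_add]; ring_nf
  have h2pow : (2:ZMod (p^3))^(2*m) = 1 + (p : ZMod (p^3)) * (qn : ZMod (p^3)) := by
    have : ((2^(2*m) : ℕ) : ZMod (p^3)) = ((1 + p*qn : ℕ) : ZMod (p^3)) := by
      rw [show 2*m = p - 1 by omega, hpow]
    push_cast at this
    exact_mod_cast this
  set S3 : ZMod (p^3) := ∑ i ∈ Finset.Icc 1 m, ((i:ℕ) : ZMod (p^3))⁻¹ with hS3
  set T3 : ZMod (p^3) := ∑ i ∈ Finset.Icc 1 m, (((i:ℕ) : ZMod (p^3))⁻¹)^2 with hT3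
  set qR : ZMod (p^3) := (qn : ZMod (p^3)) with hqR
  have hE1 : 2 * P₁ = 2 - 2*(p:ZMod (p^3))*S3 + (p:ZMod (p^3))^2 * (S3^2 - T3) :=
    prod_expand (p:ZMod (p^3)) hπ3 _ _
  have hE2 : 2 * P₂ = 2 - 2*(p:ZMod (p^3))*(c3*S3)
      + (p:ZMod (p^3))^2 * ((c3*S3)^2 - c3^2*T3) := by
    have := prod_expand (p:ZMod (p^3)) hπ3 (Finset.Icc 1 m)
      (fun i => c3 * ((i:ℕ) : ZMod (p^3))⁻¹)
    rw [← Finset.mul_sum] at this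
    have hsq : ∑ i ∈ Finset.Icc 1 m, (c3 * ((i:ℕ) : ZMod (p^3))⁻¹)^2 = c3^2 * T3 := by
      rw [hT3, Finset.mul_sum]
      exact Finset.sum_congr rfl (fun i _ => by ring)
    rw [hsq] at this
    exact this
  have hE4 : 2 * P₁ = (1 + (p:ZMod (p^3))*qR) * (2 * P₂) := by
    rw [hcancel, h2pow]; ring
  have key3 : (p : ZMod (p^3)) * (S3 + 2*qR - (p:ZMod (p^3))*qR*S3
      - 3*c3^2*(p:ZMod (p^3))*(S3^2 - T3)) = 0 := by
    linear_combination hE1 - hE4 - (1+(p:ZMod (p^3))*qR) * hE2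
      + ((p:ZMod (p^3))*S3 + (p:ZMod (p^3))^2*qR*S3
          - (p:ZMod (p^3))^2*(S3^2-T3)*(1+2*c3)) * hc3
      - (qR*c3^2*(S3^2-T3)) * hπ3
  -- descend to ZMod p^2
  set f := ZMod.castHom (show p^2 ∣ p^3 from pow_dvd_pow p (by norm_num)) (ZMod (p^2)) with hf
  have hX2 := pmul_zero_down hppos _ key3
  set S2 : ZMod (p^2) := ∑ i ∈ Finset.Icc 1 m, ((i:ℕ) : ZMod (p^2))⁻¹ with hS2def
  set T2 : ZMod (p^2) := ∑ i ∈ Finset.Icc 1 m, (((i:ℕ) : ZMod (p^2))⁻¹)^2 with hT2def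
  set c2 : ZMod (p^2) := ((2:ℕ) : ZMod (p^2))⁻¹ with hc2def
  set q2 : ZMod (p^2) := (qn : ZMod (p^2)) with hq2def
  have fS : f S3 = S2 := by
    rw [hS3, hS2def, map_sum]
    exact Finset.sum_congr rfl (fun i hi => cast_inv _ i (hcop_i i hi 3))
  have fT : f T3 = T2 := by
    rw [hT3, hT2def, map_sum]
    refine Finset.sum_congr rfl (fun i hi => ?_)
    rw [map_pow, cast_inv _ i (hcop_i i hi 3)]
  have fc : f c3 = c2 := by
    rw [hc3def, hc2def]
    exact cast_inv _ 2 (hcop 2 hndvd2 3)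
  have hEq2 : S2 + 2*q2 - (p:ZMod (p^2))*q2*S2 - 3*c2^2*(p:ZMod (p^2))*(S2^2 - T2) = 0 := by
    rw [← fS, ← fc, ← fT, hq2def, ← map_natCast f qn, ← map_natCast f p]
    simp only [← map_pow, ← map_mul, ← map_ofNat f, ← map_add, ← map_sub]
    exact hX2
  have gT : ZMod.castHom (show p ∣ p^2 from dvd_pow_self p (by norm_num)) (ZMod p) T2 = 0 := by
    rw [hT2def, map_sum]
    rw [Finset.sum_congr rfl (fun i hi => by
      rw [map_pow, cast_inv _ i (hcop_i i hi 2)])]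
    exact sum_Icc_invsq_zero hp hp3 m hm
  have hpT2 : (p:ZMod (p^2)) * T2 = 0 := pmul_zero_up hppos T2 gT
  have hp2sq : ((p:ZMod (p^2)))^2 = 0 := by
    rw [← Nat.cast_pow]
    exact ZMod.natCast_self (p^2)
  have hc2m : (2:ZMod (p^2)) * c2 = 1 := by
    have := ZMod.coe_mul_inv_eq_one (n := p^2) 2 (hcop 2 hndvd2 2)
    rw [hc2def]
    exact_mod_cast this
  have hpS2 : (p:ZMod (p^2)) * S2 = -2*(p:ZMod (p^2))*q2 := by
    linear_combination (p:ZMod (p^2))*hEq2 + (q2*S2 + 3*c2^2*(S2^2-T2))*hp2sq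
  show S2 = -2 * q2 + (p:ZMod (p^2)) * q2^2
  linear_combination hEq2 + q2*hpS2 + 3*c2^2*S2*hpS2 - 6*c2^2*q2*hpS2
    - 3*c2^2*hpT2 + 3*(p:ZMod (p^2))*q2^2*(2*c2+1)*hc2m


theorem S0_value_mod_p_sq (p : ℕ) (hp : p.Prime) (hp3 : 3 < p) :
    (∑ i ∈ (Finset.Ioo 0 p).filter (fun i => Even i), ((i : ZMod (p ^ 2)))⁻¹
        = -∑ i ∈ (Finset.Ioo 0 p).filter (fun i => Odd i), ((i : ZMod (p ^ 2)))⁻¹) ∧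
    (∑ i ∈ (Finset.Ioo 0 p).filter (fun i => Even i), ((i : ZMod (p ^ 2)))⁻¹
        = -(((2 ^ (p - 1) - 1) / p : ℕ) : ZMod (p ^ 2))
          + (2 : ZMod (p ^ 2))⁻¹ * (p : ZMod (p ^ 2))
            * (((2 ^ (p - 1) - 1) / p : ℕ) : ZMod (p ^ 2)) ^ 2) := by
  haveI : Fact p.Prime := ⟨hp⟩
  haveI : NeZero p := ⟨hp.ne_zero⟩
  haveI : NeZero (p^2) := ⟨by positivity⟩
  have hppos : 0 < p := by omega
  have hodd : p % 2 = 1 := Nat.odd_iff.mp (hp.odd_of_ne_two (by omega))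
  obtain ⟨m, hm⟩ : ∃ m, p = 2*m+1 := ⟨p/2, by omega⟩
  have hcop : ∀ (a : ℕ), ¬ (p ∣ a) → ∀ k : ℕ, a.Coprime (p^k) := by
    intro a ha k
    exact Nat.Coprime.pow_right k (Nat.coprime_comm.mp ((Nat.Prime.coprime_iff_not_dvd hp).mpr ha))
  have hndvd_lt : ∀ i : ℕ, 0 < i → i < p → ¬ (p ∣ i) := by
    intro i h1 h2 hd
    have := Nat.le_of_dvd h1 hd
    omega
  have hndvd2 : ¬ (p ∣ 2) := hndvd_lt 2 (by norm_num) (by omega)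
  set c2 : ZMod (p^2) := ((2:ℕ) : ZMod (p^2))⁻¹ with hc2def
  have hc2m : (2:ZMod (p^2)) * c2 = 1 := by
    have := ZMod.coe_mul_inv_eq_one (n := p^2) 2 (hcop 2 hndvd2 2)
    rw [hc2def]
    exact_mod_cast this
  have hinv2 : ∀ i : ℕ, 0 < i → i < p → ((i:ℕ) : ZMod (p^2)) * ((i:ℕ) : ZMod (p^2))⁻¹ = 1 :=
    fun i h1 h2 => ZMod.coe_mul_inv_eq_one i (hcop i (hndvd_lt i h1 h2) 2)
  -- even sum equals c2 * S2
  have hES : ∑ i ∈ (Finset.Ioo 0 p).filter (fun i => Even i), ((i : ZMod (p ^ 2)))⁻¹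
      = c2 * ∑ i ∈ Finset.Icc 1 m, ((i : ZMod (p^2)))⁻¹ := by
    rw [Finset.mul_sum]
    refine (Finset.sum_nbij' (fun i => i/2) (fun j => 2*j) ?_ ?_ ?_ ?_ ?_).symm.symm
    · intro a ha
      simp only [Finset.mem_filter, Finset.mem_Ioo, Finset.mem_Icc, Nat.even_iff] at *
      omega
    · intro j hj
      simp only [Finset.mem_filter, Finset.mem_Ioo, Finset.mem_Icc, Nat.even_iff] at *
      omega
    · intro a ha
      simp only [Finset.mem_filter, Finset.mem_Ioo, Nat.even_iff] at ha
      show 2 * (a / 2) = a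
      omega
    · intro j hj
      show 2 * j / 2 = j
      omega
    · intro a ha
      simp only [Finset.mem_filter, Finset.mem_Ioo, Nat.even_iff] at ha
      have h2a : a = 2 * (a/2) := by omega
      have hbound : 0 < a/2 ∧ a/2 < p := by omega
      rw [show ((a:ℕ) : ZMod (p^2)) = ((2 * (a/2) : ℕ) : ZMod (p^2)) from by rw [← h2a]]
      refine inv_eq_of_mul_nat (2*(a/2)) ?_ _ ?_
      · refine hcop _ ?_ 2
        intro hd
        rcases (Nat.Prime.dvd_mul hp).mp hd with h | h
        · exact hndvd2 h
        · exact hndvd_lt _ hbound.1 hbound.2 h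
      · push_cast
        have h1 := hinv2 (a/2) hbound.1 hbound.2
        linear_combination (((a/2 : ℕ):ZMod (p^2)) * ((a/2 : ℕ):ZMod (p^2))⁻¹) * hc2m + h1
  -- full sum is zero
  have hF : ∑ i ∈ Finset.Ioo 0 p, ((i : ZMod (p ^ 2)))⁻¹ = 0 := by
    set F := ∑ i ∈ Finset.Ioo 0 p, ((i : ZMod (p ^ 2)))⁻¹ with hFdef
    have hrev : F = ∑ i ∈ Finset.Ioo 0 p, (((p - i : ℕ) : ZMod (p ^ 2)))⁻¹ := by
      refine Finset.sum_nbij' (fun i => p - i) (fun i => p - i) ?_ ?_ ?_ ?_ ?_ <;>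
          intro a ha <;> simp only [Finset.mem_Ioo] at *
      · omega
      · omega
      · omega
      · omega
      · rw [show p - (p - a) = a by omega]
    have hpt : ∀ i ∈ Finset.Ioo 0 p, ((i : ZMod (p ^ 2)))⁻¹ + (((p - i : ℕ) : ZMod (p ^ 2)))⁻¹
        = (p : ZMod (p^2)) * (((i * (p - i) : ℕ) : ZMod (p ^ 2)))⁻¹ := by
      intro i hi
      rw [Finset.mem_Ioo] at hi
      have hi1 := hinv2 i hi.1 hi.2
      have hi2 := hinv2 (p - i) (by omega) (by omega)
      have hu : ((i * (p - i) : ℕ) : ZMod (p ^ 2)) * ((i * (p - i) : ℕ) : ZMod (p ^ 2))⁻¹ = 1 := by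
        refine ZMod.coe_mul_inv_eq_one _ (hcop _ ?_ 2)
        intro hd
        rcases (Nat.Prime.dvd_mul hp).mp hd with h | h
        · exact hndvd_lt _ hi.1 hi.2 h
        · exact hndvd_lt _ (by omega) (by omega) h
      have hcast : ((i * (p - i) : ℕ) : ZMod (p ^ 2))
          = ((i:ℕ) : ZMod (p^2)) * (((p - i:ℕ)) : ZMod (p^2)) := by push_cast; ring
      have hsum : ((i:ℕ) : ZMod (p^2)) + (((p - i:ℕ)) : ZMod (p^2)) = (p : ZMod (p^2)) := by
        rw [← Nat.cast_add]
        congr 1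
        omega
      set a := ((i:ℕ) : ZMod (p^2))⁻¹
      set b := (((p - i:ℕ)) : ZMod (p^2))⁻¹
      set u' := ((i * (p - i) : ℕ) : ZMod (p ^ 2))⁻¹
      have hzero : (a + b - (p : ZMod (p^2)) * u') * ((i * (p - i) : ℕ) : ZMod (p ^ 2)) = 0 := by
        have hu' := hu
        rw [hcast] at hu'
        rw [hcast]
        linear_combination (((p - i:ℕ)) : ZMod (p^2)) * hi1 + ((i:ℕ) : ZMod (p^2)) * hi2
          - (p : ZMod (p^2)) * hu' + hsum
      have hx : a + b - (p : ZMod (p^2)) * u' = 0 := by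
        calc a + b - (p : ZMod (p^2)) * u'
            = (a + b - (p : ZMod (p^2)) * u') * (((i * (p - i) : ℕ) : ZMod (p ^ 2)) * u') := by
              rw [hu, mul_one]
          _ = ((a + b - (p : ZMod (p^2)) * u') * ((i * (p - i) : ℕ) : ZMod (p ^ 2))) * u' := by
              ring
          _ = 0 := by rw [hzero, zero_mul]
      linear_combination hx
    have h2F : 2 * F = (p : ZMod (p^2)) * ∑ i ∈ Finset.Ioo 0 p, (((i * (p - i) : ℕ) : ZMod (p ^ 2)))⁻¹ := by
      rw [two_mul]
      nth_rewrite 2 [hrev]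
      rw [← Finset.sum_add_distrib, Finset.sum_congr rfl hpt, Finset.mul_sum]
    have hG : ZMod.castHom (show p ∣ p^2 from dvd_pow_self p (by norm_num)) (ZMod p)
        (∑ i ∈ Finset.Ioo 0 p, (((i * (p - i) : ℕ) : ZMod (p ^ 2)))⁻¹) = 0 := by
      rw [map_sum]
      have hcong : ∀ i ∈ Finset.Ioo 0 p,
          ZMod.castHom (show p ∣ p^2 from dvd_pow_self p (by norm_num)) (ZMod p)
            (((i * (p - i) : ℕ) : ZMod (p ^ 2)))⁻¹ = -(((i : ZMod p))⁻¹)^2 := by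
        intro i hi
        rw [Finset.mem_Ioo] at hi
        have hcp : (i * (p - i)).Coprime (p^2) := by
          refine hcop _ ?_ 2
          intro hd
          rcases (Nat.Prime.dvd_mul hp).mp hd with h | h
          · exact hndvd_lt _ hi.1 hi.2 h
          · exact hndvd_lt _ (by omega) (by omega) h
        rw [cast_inv _ _ hcp]
        have hc : ((i * (p - i) : ℕ) : ZMod p) = -((i : ZMod p))^2 := by
          have : ((i * (p - i) : ℕ) : ZMod p) = (i : ZMod p) * (((p - i:ℕ)) : ZMod p) := by
            push_cast; ring
          rw [this, Nat.cast_sub (by omega : i ≤ p), ZMod.natCast_self]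
          ring
        rw [hc, inv_neg, ← inv_pow]
      rw [Finset.sum_congr rfl hcong]
      rw [show (∑ i ∈ Finset.Ioo 0 p, -(((i : ZMod p))⁻¹)^2)
          = -(∑ i ∈ Finset.Ioo 0 p, (((i : ZMod p))⁻¹)^2) from by
        rw [← Finset.sum_neg_distrib]]
      rw [sum_Ioo_invsq_zero hp hp3, neg_zero]
    have hpG : (p : ZMod (p^2)) * ∑ i ∈ Finset.Ioo 0 p, (((i * (p - i) : ℕ) : ZMod (p ^ 2)))⁻¹ = 0 :=
      pmul_zero_up hppos _ hG
    have hFc : F = c2 * (2 * F) := by linear_combination (-F) * hc2m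
    rw [h2F, hpG, mul_zero] at hFc
    exact hFc
  constructor
  · have hOdd : (Finset.Ioo 0 p).filter (fun i => Odd i)
        = (Finset.Ioo 0 p).filter (fun i => ¬ Even i) :=
      Finset.filter_congr (fun i _ => (Nat.not_even_iff_odd).symm)
    have hsplit := Finset.sum_filter_add_sum_filter_not (Finset.Ioo 0 p) (fun i => Even i)
      (fun i => ((i : ZMod (p ^ 2)))⁻¹)
    rw [hF] at hsplit
    rw [hOdd]
    linear_combination hsplit
  · rw [hES, S2_val hp hp3 m hm]
    have h22 : ((2:ℕ) : ZMod (p^2)) = (2 : ZMod (p^2)) := by norm_cast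
    rw [← h22, ← hc2def]
    linear_combination (-((((2 ^ (p - 1) - 1) / p : ℕ) : ZMod (p ^ 2)))) * hc2m
end

section
/- Let p be a prime with p > 3 and q = (2^(p-1) - 1)/p. Then in ZMod p, S_00 = S_11 = (1/2)·q^2, where S_00 (resp. S_11) is the sum of 1/(ij) over pairs 0 < i < j < p with both i and j even (resp. both odd), and 1/2 is the inverse of 2 in ZMod p. -/
/-!
Write `1/i` for inverses in `ZMod p` and let `A`, `B` be the sums of `1/i` over odd and over even
`0 < i < p`. The reflection `i ↦ p - i` swaps parities and negates `1/i`, so `A = -B`, and the odd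
and even sums of `1/i²` agree. Since `C(p, k)/p ≡ (-1)^(k-1)/k (mod p)`, summing over `0 < k < p`
gives `2q = (2^p - 2)/p ≡ A - B = 2A`, so `A = q` and `B = -q`. For `p > 3` the full sum of `1/i²`
is a permuted `∑ x²` over `ZMod p`, which vanishes, so both parity halves of it vanish, and
`S = ((∑ 1/i)² - ∑ 1/i²)/2` gives `S₀₀ = S₁₁ = q²/2`.
-/

open Finset

theorem Finset.sq_sum_eq_sum_sq_add_two_mul_sum_lt {α R : Type*} [LinearOrder α] [CommSemiring R]
    (s : Finset α) (f : α → R) :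
    (∑ i ∈ s, f i) ^ 2 = ∑ i ∈ s, f i ^ 2 + 2 * ∑ i ∈ s, ∑ j ∈ s with i < j, f i * f j := by
  have trichotomy : ∀ i j, f i * f j = (if i < j then f i * f j else 0) +
      (if j < i then f j * f i else 0) + (if i = j then f i ^ 2 else 0) := by
    intro i j
    rcases lt_trichotomy i j with h | rfl | h
    · simp [h, h.not_gt, h.ne]
    · simp [sq]
    · simp [h, h.not_gt, h.ne', mul_comm]
  have swap : ∑ i ∈ s, ∑ j ∈ s, (if j < i then f j * f i else 0) =
      ∑ i ∈ s, ∑ j ∈ s, (if i < j then f i * f j else 0) := sum_comm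
  calc (∑ i ∈ s, f i) ^ 2 = ∑ i ∈ s, ∑ j ∈ s, f i * f j := by rw [sq, sum_mul_sum]
    _ = _ := by
      rw [sum_congr rfl fun i _ => sum_congr rfl fun j _ => trichotomy i j]
      simp only [sum_add_distrib, swap, sum_ite_eq]
      simp only [← sum_filter, filter_mem_eq_inter, inter_self]
      ring

theorem Finset.sum_neg_one_pow_mul {R : Type*} [Ring R] (s : Finset ℕ) (f : ℕ → R) :
    ∑ k ∈ s, (-1) ^ k * f k = ∑ k ∈ s with Even k, f k - ∑ k ∈ s with Odd k, f k := by
  rw [← sum_filter_add_sum_filter_not s Even, sub_eq_add_neg, ← sum_neg_distrib]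
  simp only [Nat.not_even_iff_odd]
  congr 1 <;> refine sum_congr rfl fun k hk => ?_
  · rw [(mem_filter.1 hk).2.neg_one_pow, one_mul]
  · rw [(mem_filter.1 hk).2.neg_one_pow, neg_one_mul]

theorem Nat.filter_Ioo_eq_filter_filter_Ioo_zero (P : ℕ → Prop) [DecidablePred P] (i n : ℕ) :
    (Ioo i n).filter P = ((Ioo 0 n).filter P).filter (fun j => i < j) := by
  rw [filter_comm]
  congr 1
  ext j
  simp only [mem_filter, mem_Ioo]
  omega

theorem Nat.sum_filter_odd_Ioo_eq_sum_filter_even_Ioo_sub {M : Type*} [AddCommMonoid M] {n : ℕ}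
    (hn : Odd n) (g : ℕ → M) :
    ∑ i ∈ (Ioo 0 n).filter (fun i => Odd i), g i =
      ∑ i ∈ (Ioo 0 n).filter (fun i => Even i), g (n - i) := by
  have hn_pos := hn.pos
  refine sum_nbij' (n - ·) (n - ·) ?_ ?_ ?_ ?_ ?_ <;>
    intro i hi <;> simp only [mem_filter, mem_Ioo] at hi ⊢
  · refine ⟨by omega, (Nat.even_sub hi.1.2.le).2 ?_⟩
    simp only [← Nat.not_odd_iff_even, hn, hi.2]
  · exact ⟨by omega, (Nat.odd_sub hi.1.2.le).2 (iff_of_true hn hi.2)⟩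
  · omega
  · omega
  · rw [Nat.sub_sub_self hi.1.2.le]

theorem Nat.sum_Ioo_choose_div_self {p : ℕ} (hp : p.Prime) :
    ∑ k ∈ Ioo 0 p, p.choose k / p = (2 ^ p - 2) / p := by
  rw [← Nat.sum_div fun k hk => hp.dvd_choose_self (mem_Ioo.1 hk).1.ne' (mem_Ioo.1 hk).2]
  have hsum := Nat.sum_range_choose p
  rw [sum_range_eq_add_Ico _ (by omega), sum_Ico_succ_top hp.one_le, Nat.choose_self,
    Nat.choose_zero_right, ← zero_add 1, Ico_add_one_left_eq_Ioo] at hsum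
  congr 1
  omega

theorem Nat.two_pow_sub_two_div_self {p : ℕ} (hp : p.Prime) (hp2 : p ≠ 2) :
    (2 ^ p - 2) / p = 2 * ((2 ^ (p - 1) - 1) / p) := by
  have hfermat : p ∣ 2 ^ (p - 1) - 1 := Nat.dvd_of_mod_eq_zero <|
    Nat.pow_card_sub_one_sub_one_mod_card hp ((Nat.coprime_primes Nat.prime_two hp).2 hp2.symm)
  rw [← Nat.mul_div_assoc 2 hfermat, Nat.mul_sub_one, ← _root_.pow_succ',
    Nat.sub_add_cancel hp.one_le]

theorem sum_filter_Ioo_sum_filter_Ioo_inv_mul {K : Type*} [Field K] (n : ℕ) (P : ℕ → Prop)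
    [DecidablePred P] (h2 : (2 : K) ≠ 0) (hsq : ∑ i ∈ (Ioo 0 n).filter P, ((i : K)⁻¹) ^ 2 = 0) :
    ∑ i ∈ (Ioo 0 n).filter P, ∑ j ∈ (Ioo i n).filter P, ((i : K) * (j : K))⁻¹ =
      2⁻¹ * (∑ i ∈ (Ioo 0 n).filter P, (i : K)⁻¹) ^ 2 := by
  rw [sq_sum_eq_sum_sq_add_two_mul_sum_lt, hsq, zero_add, ← mul_assoc, inv_mul_cancel₀ h2,
    one_mul]
  refine sum_congr rfl fun i _ => ?_
  rw [Nat.filter_Ioo_eq_filter_filter_Ioo_zero]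
  simp only [mul_inv]

namespace ZMod

variable {p : ℕ}

theorem sum_filter_odd_Ioo_eq_sum_filter_even_Ioo_neg {M : Type*} [AddCommMonoid M] (hp : Odd p)
    (g : ZMod p → M) :
    ∑ i ∈ (Ioo 0 p).filter (fun i => Odd i), g i =
      ∑ i ∈ (Ioo 0 p).filter (fun i => Even i), g (-i) := by
  rw [Nat.sum_filter_odd_Ioo_eq_sum_filter_even_Ioo_sub hp]
  refine sum_congr rfl fun i hi => ?_
  rw [Nat.cast_sub (mem_Ioo.1 (mem_filter.1 hi).1).2.le, natCast_self, zero_sub]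

theorem sum_range_natCast_eq_sum_univ [NeZero p] {M : Type*} [AddCommMonoid M] (g : ZMod p → M) :
    ∑ i ∈ range p, g i = ∑ x, g x :=
  sum_nbij' (↑) val (fun _ _ => mem_univ _) (fun x _ => mem_range.2 (val_lt x))
    (fun _ hi => val_cast_of_lt (mem_range.1 hi)) (fun x _ => natCast_zmod_val x) fun _ _ => rfl

theorem sum_Ioo_inv_sq [Fact p.Prime] (hp : 3 < p) :
    ∑ i ∈ Ioo 0 p, ((i : ZMod p)⁻¹) ^ 2 = 0 :=
  calc ∑ i ∈ Ioo 0 p, ((i : ZMod p)⁻¹) ^ 2 = ∑ i ∈ range p, ((i : ZMod p)⁻¹) ^ 2 := by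
        rw [sum_range_eq_add_Ico _ (by omega), ← zero_add 1, Ico_add_one_left_eq_Ioo,
          Nat.cast_zero, inv_zero, zero_pow two_ne_zero, zero_add]
    _ = ∑ x : ZMod p, x⁻¹ ^ 2 := sum_range_natCast_eq_sum_univ fun x => x⁻¹ ^ 2
    _ = ∑ x : ZMod p, x ^ 2 := Equiv.sum_comp (Equiv.inv _) fun x => x ^ 2
    _ = 0 := FiniteField.sum_pow_lt_card_sub_one (K := ZMod p) 2 (by rw [ZMod.card]; omega)

theorem natCast_sub_one_choose [Fact p.Prime] {k : ℕ} (hk : k < p) :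
    ((p - 1).choose k : ZMod p) = (-1) ^ k := by
  induction k with
  | zero => simp
  | succ k ih =>
    have hpascal : (p - 1).choose k + (p - 1).choose (k + 1) = p.choose (k + 1) := by
      rw [← Nat.choose_succ_succ', Nat.sub_add_cancel (Fact.out : p.Prime).one_le]
    have hvanish : (p.choose (k + 1) : ZMod p) = 0 :=
      (natCast_eq_zero_iff _ _).2 ((Fact.out : p.Prime).dvd_choose_self k.succ_ne_zero hk)
    have := congrArg (Nat.cast : ℕ → ZMod p) hpascal
    push_cast [hvanish, ih (by omega)] at this
    linear_combination this

theorem natCast_choose_div_self [Fact p.Prime] {k : ℕ} (hk0 : 0 < k) (hkp : k < p) :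
    ((p.choose k / p : ℕ) : ZMod p) = -((-1) ^ k * (k : ZMod p)⁻¹) := by
  have hp : p.Prime := Fact.out
  obtain ⟨m, rfl⟩ : ∃ m, k = m + 1 := ⟨k - 1, by omega⟩
  have hmul : (m + 1) * (p.choose (m + 1) / p) = (p - 1).choose m := by
    apply Nat.eq_of_mul_eq_mul_left hp.pos
    have hpascal := Nat.add_one_mul_choose_eq (p - 1) m
    rw [Nat.sub_add_cancel hp.one_le] at hpascal
    rw [mul_left_comm, Nat.mul_div_cancel' (hp.dvd_choose_self hk0.ne' hkp), hpascal, mul_comm]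
  have hk : ((m + 1 : ℕ) : ZMod p) ≠ 0 := by
    rw [Ne, natCast_eq_zero_iff]
    exact Nat.not_dvd_of_pos_of_lt hk0 hkp
  have := congrArg (Nat.cast : ℕ → ZMod p) hmul
  push_cast [natCast_sub_one_choose (by omega : m < p)] at this
  push_cast at hk ⊢
  rw [← neg_mul, eq_mul_inv_iff_mul_eq₀ hk]
  linear_combination this

theorem two_ne_zero_of_ne_two [Fact p.Prime] (hp2 : p ≠ 2) : (2 : ZMod p) ≠ 0 :=
  Ring.two_ne_zero (by rwa [ringChar_zmod_n])

theorem sum_filter_odd_Ioo_inv_eq_neg [Fact p.Prime] (hp2 : p ≠ 2) :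
    ∑ i ∈ (Ioo 0 p).filter (fun i => Odd i), (i : ZMod p)⁻¹ =
      -∑ i ∈ (Ioo 0 p).filter (fun i => Even i), (i : ZMod p)⁻¹ := by
  rw [sum_filter_odd_Ioo_eq_sum_filter_even_Ioo_neg (Nat.Prime.odd_of_ne_two Fact.out hp2)
    fun x => x⁻¹, ← sum_neg_distrib]
  simp only [inv_neg]

theorem sum_filter_odd_Ioo_inv [Fact p.Prime] (hp2 : p ≠ 2) :
    ∑ i ∈ (Ioo 0 p).filter (fun i => Odd i), (i : ZMod p)⁻¹ = ((2 ^ (p - 1) - 1) / p : ℕ) := by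
  have hp : p.Prime := Fact.out
  have halternating : (2 : ZMod p) * ((2 ^ (p - 1) - 1) / p : ℕ) =
      ∑ i ∈ (Ioo 0 p).filter (fun i => Odd i), (i : ZMod p)⁻¹ -
        ∑ i ∈ (Ioo 0 p).filter (fun i => Even i), (i : ZMod p)⁻¹ :=
    calc (2 : ZMod p) * ((2 ^ (p - 1) - 1) / p : ℕ) = ((2 ^ p - 2) / p : ℕ) := by
          rw [Nat.two_pow_sub_two_div_self hp hp2, Nat.cast_mul, Nat.cast_ofNat]
      _ = ∑ k ∈ Ioo 0 p, ((p.choose k / p : ℕ) : ZMod p) := by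
          rw [← Nat.sum_Ioo_choose_div_self hp, Nat.cast_sum]
      _ = ∑ k ∈ Ioo 0 p, -((-1) ^ k * (k : ZMod p)⁻¹) := sum_congr rfl fun k hk =>
          natCast_choose_div_self (mem_Ioo.1 hk).1 (mem_Ioo.1 hk).2
      _ = _ := by rw [sum_neg_distrib, sum_neg_one_pow_mul, neg_sub]
  rw [sum_filter_odd_Ioo_inv_eq_neg hp2] at halternating ⊢
  refine mul_left_cancel₀ (two_ne_zero_of_ne_two hp2) ?_
  linear_combination -halternating

theorem sum_filter_even_Ioo_inv [Fact p.Prime] (hp2 : p ≠ 2) :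
    ∑ i ∈ (Ioo 0 p).filter (fun i => Even i), (i : ZMod p)⁻¹ = -((2 ^ (p - 1) - 1) / p : ℕ) := by
  rw [← sum_filter_odd_Ioo_inv hp2, sum_filter_odd_Ioo_inv_eq_neg hp2, neg_neg]

theorem sum_filter_odd_Ioo_inv_sq_eq [Fact p.Prime] (hp2 : p ≠ 2) :
    ∑ i ∈ (Ioo 0 p).filter (fun i => Odd i), ((i : ZMod p)⁻¹) ^ 2 =
      ∑ i ∈ (Ioo 0 p).filter (fun i => Even i), ((i : ZMod p)⁻¹) ^ 2 := by
  rw [sum_filter_odd_Ioo_eq_sum_filter_even_Ioo_neg (Nat.Prime.odd_of_ne_two Fact.out hp2)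
    fun x => x⁻¹ ^ 2]
  simp only [inv_neg, neg_sq]

theorem sum_filter_even_Ioo_inv_sq [Fact p.Prime] (hp : 3 < p) :
    ∑ i ∈ (Ioo 0 p).filter (fun i => Even i), ((i : ZMod p)⁻¹) ^ 2 = 0 := by
  have hp2 : p ≠ 2 := by omega
  have htotal := sum_Ioo_inv_sq hp
  rw [← sum_filter_add_sum_filter_not _ (fun i => Even i)] at htotal
  simp only [Nat.not_even_iff_odd] at htotal
  rw [sum_filter_odd_Ioo_inv_sq_eq hp2, ← two_mul] at htotal
  exact (mul_eq_zero.1 htotal).resolve_left (two_ne_zero_of_ne_two hp2)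

theorem sum_filter_odd_Ioo_inv_sq [Fact p.Prime] (hp : 3 < p) :
    ∑ i ∈ (Ioo 0 p).filter (fun i => Odd i), ((i : ZMod p)⁻¹) ^ 2 = 0 := by
  rw [sum_filter_odd_Ioo_inv_sq_eq (by omega), sum_filter_even_Ioo_inv_sq hp]

end ZMod

theorem S00_S11_value (p : ℕ) (hp : p.Prime) (hp3 : 3 < p) :
    ((∑ i ∈ (Finset.Ioo 0 p).filter (fun i => Even i),
        ∑ j ∈ (Finset.Ioo i p).filter (fun j => Even j),
          ((i : ZMod p) * (j : ZMod p))⁻¹)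
      = (∑ i ∈ (Finset.Ioo 0 p).filter (fun i => Odd i),
          ∑ j ∈ (Finset.Ioo i p).filter (fun j => Odd j),
            ((i : ZMod p) * (j : ZMod p))⁻¹)) ∧
    ((∑ i ∈ (Finset.Ioo 0 p).filter (fun i => Odd i),
        ∑ j ∈ (Finset.Ioo i p).filter (fun j => Odd j),
          ((i : ZMod p) * (j : ZMod p))⁻¹)
      = (2 : ZMod p)⁻¹ * (((2 ^ (p - 1) - 1) / p : ℕ) : ZMod p) ^ 2) := by
  have : Fact p.Prime := ⟨hp⟩
  have hp2 : p ≠ 2 := by omega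
  have h2 := ZMod.two_ne_zero_of_ne_two hp2
  rw [sum_filter_Ioo_sum_filter_Ioo_inv_mul p _ h2 (ZMod.sum_filter_even_Ioo_inv_sq hp3),
    sum_filter_Ioo_sum_filter_Ioo_inv_mul p _ h2 (ZMod.sum_filter_odd_Ioo_inv_sq hp3),
    ZMod.sum_filter_even_Ioo_inv hp2, ZMod.sum_filter_odd_Ioo_inv hp2, neg_sq]
  exact ⟨rfl, rfl⟩
end

section
/- Let p be a prime with p > 3 and q = (2^(p-1) - 1)/p. Then in ZMod p, S_01 = -2·S_00 = -q^2, where S_01 is the sum of 1/(ij) over pairs 0 < i < j < p with i even and j odd, and S_00 is the sum of 1/(ij) over pairs 0 < i < j < p with both i and j even. -/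
open Finset

namespace S01aux

variable (p : ℕ)

/-- The grid of pairs. -/
def G : Finset (ℕ × ℕ) := (Finset.Ioo 0 p) ×ˢ (Finset.Ioo 0 p)

noncomputable def S (a b : ℕ) : ZMod p :=
  ∑ z ∈ (G p).filter (fun z => z.1 % 2 = a ∧ z.2 % 2 = b ∧ z.1 < z.2),
    ((z.1 : ZMod p) * (z.2 : ZMod p))⁻¹

lemma cast_ne_zero (hp : p.Prime) {i : ℕ} (h0 : 0 < i) (hip : i < p) :
    (i : ZMod p) ≠ 0 := by
  rw [Ne, ZMod.natCast_eq_zero_iff]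
  intro h
  exact absurd (Nat.le_of_dvd h0 h) (by omega)

lemma cast_sub (hip : i ≤ p) : ((p - i : ℕ) : ZMod p) = -(i : ZMod p) := by
  rw [Nat.cast_sub hip, ZMod.natCast_self, zero_sub]

lemma sum_Ioo_eq_univ [NeZero p] (hp : p.Prime) (f : ZMod p → ZMod p) (h0 : f 0 = 0) :
    ∑ i ∈ Finset.Ioo 0 p, f (i : ZMod p) = ∑ x : ZMod p, f x := by
  haveI : Fact p.Prime := ⟨hp⟩
  rw [← Finset.sum_erase (Finset.univ) (a := (0 : ZMod p)) h0]
  refine Finset.sum_nbij' (fun i => (i : ZMod p)) (fun x => x.val) ?_ ?_ ?_ ?_ ?_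
  · intro a ha
    simp only [Finset.mem_Ioo] at ha
    simp only [Finset.mem_erase, Finset.mem_univ, and_true]
    exact cast_ne_zero p hp ha.1 ha.2
  · intro x hx
    simp only [Finset.mem_erase, Finset.mem_univ, and_true] at hx
    simp only [Finset.mem_Ioo]
    exact ⟨Nat.pos_of_ne_zero (fun h => hx (by rwa [← ZMod.val_eq_zero])), ZMod.val_lt x⟩
  · intro a ha
    simp only [Finset.mem_Ioo] at ha
    exact ZMod.val_cast_of_lt ha.2
  · intro x _
    exact ZMod.natCast_zmod_val x
  · intro a _; rfl

lemma sum_inv_sq_zero (hp : p.Prime) (hp3 : 3 < p) :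
    ∑ i ∈ Finset.Ioo 0 p, ((i : ZMod p)⁻¹) ^ 2 = 0 := by
  haveI : Fact p.Prime := ⟨hp⟩
  haveI : NeZero p := ⟨hp.ne_zero⟩
  rw [sum_Ioo_eq_univ p hp (fun x => (x⁻¹) ^ 2) (by simp)]
  have h1 : ∑ x : ZMod p, (x⁻¹) ^ 2 = ∑ x : ZMod p, x ^ 2 :=
    Fintype.sum_bijective Inv.inv inv_involutive.bijective _ _ (fun x => rfl)
  rw [h1]
  have := FiniteField.sum_pow_lt_card_sub_one (ZMod p) 2 (by rw [ZMod.card]; omega)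
  exact this


lemma nested_to_pairs (a b : ℕ) (F : ℕ → ℕ → ZMod p) :
    ∑ i ∈ (Finset.Ioo 0 p).filter (fun i => i % 2 = a),
      ∑ j ∈ (Finset.Ioo i p).filter (fun j => j % 2 = b), F i j
    = ∑ z ∈ (G p).filter (fun z => z.1 % 2 = a ∧ z.2 % 2 = b ∧ z.1 < z.2), F z.1 z.2 := by
  have hR : ∑ z ∈ (G p).filter (fun z => z.1 % 2 = a ∧ z.2 % 2 = b ∧ z.1 < z.2), F z.1 z.2
      = ∑ i ∈ Finset.Ioo 0 p, ∑ j ∈ Finset.Ioo 0 p,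
          if i % 2 = a ∧ j % 2 = b ∧ i < j then F i j else 0 := by
    rw [Finset.sum_filter, G, Finset.sum_product]
  rw [hR, Finset.sum_filter]
  refine Finset.sum_congr rfl fun i _ => ?_
  have hin : (Finset.Ioo i p).filter (fun j => j % 2 = b)
      = (Finset.Ioo 0 p).filter (fun j => j % 2 = b ∧ i < j) := by
    ext j
    simp only [Finset.mem_filter, Finset.mem_Ioo]
    omega
  by_cases hi : i % 2 = a
  · rw [if_pos hi, hin, Finset.sum_filter]
    refine Finset.sum_congr rfl fun j _ => ?_
    by_cases h : j % 2 = b ∧ i < j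
    · rw [if_pos h, if_pos ⟨hi, h⟩]
    · rw [if_neg h, if_neg (by tauto)]
  · rw [if_neg hi]
    refine (Finset.sum_eq_zero fun j _ => ?_).symm
    rw [if_neg (by tauto)]

lemma sum_pair_swap (Pr : ℕ × ℕ → Prop) [DecidablePred Pr] (F : ℕ × ℕ → ZMod p) :
    ∑ z ∈ (G p).filter Pr, F z
      = ∑ z ∈ (G p).filter (fun z => Pr (z.2, z.1)), F (z.2, z.1) := by
  refine Finset.sum_nbij' (fun z => (z.2, z.1)) (fun z => (z.2, z.1)) ?_ ?_ ?_ ?_ ?_ <;>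
    simp [G, Finset.mem_filter, Finset.mem_product] <;> tauto

lemma diag_to_single (Q : ℕ → Prop) [DecidablePred Q] (F : ℕ → ℕ → ZMod p) :
    ∑ z ∈ (G p).filter (fun z => Q z.1 ∧ z.1 = z.2), F z.1 z.2
      = ∑ i ∈ (Finset.Ioo 0 p).filter Q, F i i := by
  refine Finset.sum_nbij' (fun z => z.1) (fun i => (i, i)) ?_ ?_ ?_ ?_ ?_
  · intro z hz
    simp only [G, Finset.mem_filter, Finset.mem_product] at hz ⊢
    tauto
  · intro i hi
    simp only [G, Finset.mem_filter, Finset.mem_product] at hi ⊢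
    tauto
  · intro z hz
    simp only [G, Finset.mem_filter, Finset.mem_product] at hz
    exact Prod.ext rfl hz.2.2
  · intro i _; rfl
  · intro z hz
    simp only [G, Finset.mem_filter] at hz
    rw [← hz.2.2]

lemma mul_eq_pairs (hp : p.Prime) (a b : ℕ) :
    (∑ i ∈ (Finset.Ioo 0 p).filter (fun i => i % 2 = a), (i : ZMod p)⁻¹) *
      (∑ j ∈ (Finset.Ioo 0 p).filter (fun j => j % 2 = b), (j : ZMod p)⁻¹)
    = ∑ z ∈ (G p).filter (fun z => z.1 % 2 = a ∧ z.2 % 2 = b),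
        ((z.1 : ZMod p) * (z.2 : ZMod p))⁻¹ := by
  rw [Finset.sum_mul_sum]
  have : ((G p).filter (fun z => z.1 % 2 = a ∧ z.2 % 2 = b))
      = ((Finset.Ioo 0 p).filter (fun i => i % 2 = a)) ×ˢ
        ((Finset.Ioo 0 p).filter (fun j => j % 2 = b)) := by
    ext z
    simp only [G, Finset.mem_filter, Finset.mem_product]
    tauto
  rw [this, Finset.sum_product]
  haveI : Fact p.Prime := ⟨hp⟩
  refine Finset.sum_congr rfl fun i _ => Finset.sum_congr rfl fun j _ => ?_
  rw [mul_inv]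

lemma pairs_split (a b : ℕ) :
    ∑ z ∈ (G p).filter (fun z => z.1 % 2 = a ∧ z.2 % 2 = b),
        ((z.1 : ZMod p) * (z.2 : ZMod p))⁻¹
    = S p a b + S p b a
      + ∑ i ∈ (Finset.Ioo 0 p).filter (fun i => i % 2 = a ∧ i % 2 = b),
          ((i : ZMod p) * (i : ZMod p))⁻¹ := by
  classical
  have h1 := Finset.sum_filter_add_sum_filter_not
    ((G p).filter (fun z => z.1 % 2 = a ∧ z.2 % 2 = b)) (fun z => z.1 < z.2)
    (fun z => ((z.1 : ZMod p) * (z.2 : ZMod p))⁻¹)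
  have h2 := Finset.sum_filter_add_sum_filter_not
    (((G p).filter (fun z => z.1 % 2 = a ∧ z.2 % 2 = b)).filter (fun z => ¬ z.1 < z.2))
    (fun z => z.2 < z.1) (fun z => ((z.1 : ZMod p) * (z.2 : ZMod p))⁻¹)
  rw [Finset.filter_filter] at h1 h2
  rw [Finset.filter_filter] at h2
  have e1 : ((G p).filter fun z => (z.1 % 2 = a ∧ z.2 % 2 = b) ∧ z.1 < z.2)
      = (G p).filter (fun z => z.1 % 2 = a ∧ z.2 % 2 = b ∧ z.1 < z.2) := by
    apply Finset.filter_congr; intro z _; tauto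
  have e2 : ((G p).filter fun z => (z.1 % 2 = a ∧ z.2 % 2 = b) ∧ ¬z.1 < z.2 ∧ z.2 < z.1)
      = (G p).filter (fun z => z.2 % 2 = b ∧ z.1 % 2 = a ∧ z.2 < z.1) := by
    ext z
    simp only [Finset.mem_filter, G, Finset.mem_product, Finset.mem_Ioo]
    omega
  have e3 : Finset.filter (fun x => ¬x.2 < x.1)
        (Finset.filter (fun z => ¬z.1 < z.2)
          (Finset.filter (fun z => z.1 % 2 = a ∧ z.2 % 2 = b) (G p)))
      = (G p).filter (fun z => (z.1 % 2 = a ∧ z.1 % 2 = b) ∧ z.1 = z.2) := by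
    ext z
    simp only [Finset.mem_filter, G, Finset.mem_product, Finset.mem_Ioo]
    omega
  have hswap : ∑ z ∈ (G p).filter (fun z => z.2 % 2 = b ∧ z.1 % 2 = a ∧ z.2 < z.1),
        ((z.1 : ZMod p) * (z.2 : ZMod p))⁻¹ = S p b a := by
    rw [sum_pair_swap p (fun z => z.2 % 2 = b ∧ z.1 % 2 = a ∧ z.2 < z.1)
      (fun z => ((z.1 : ZMod p) * (z.2 : ZMod p))⁻¹), S]
    refine Finset.sum_congr rfl fun z _ => ?_
    rw [mul_comm]
  have hdiag := diag_to_single p (fun i => i % 2 = a ∧ i % 2 = b)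
    (fun i j => ((i : ZMod p) * (j : ZMod p))⁻¹)
  rw [e1] at h1
  rw [e2, e3] at h2
  rw [hswap, hdiag] at h2
  rw [← h1, ← h2]
  simp only [S]
  ring


lemma sum_reflect (hodd : p % 2 = 1) (f : ℕ → ZMod p) :
    ∑ i ∈ (Finset.Ioo 0 p).filter (fun i => i % 2 = 1), f i
      = ∑ i ∈ (Finset.Ioo 0 p).filter (fun i => i % 2 = 0), f (p - i) := by
  refine Finset.sum_nbij' (fun i => p - i) (fun i => p - i) ?_ ?_ ?_ ?_ ?_
  · intro i hi
    simp only [Finset.mem_filter, Finset.mem_Ioo] at hi ⊢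
    omega
  · intro i hi
    simp only [Finset.mem_filter, Finset.mem_Ioo] at hi ⊢
    omega
  · intro i hi
    simp only [Finset.mem_filter, Finset.mem_Ioo] at hi
    show p - (p - i) = i
    omega
  · intro i hi
    simp only [Finset.mem_filter, Finset.mem_Ioo] at hi
    show p - (p - i) = i
    omega
  · intro i hi
    simp only [Finset.mem_filter, Finset.mem_Ioo] at hi
    show f i = f (p - (p - i))
    congr 1
    omega

lemma odd_pairs_split (hodd : p % 2 = 1) :
    ∑ z ∈ (G p).filter (fun z => z.1 % 2 = 1 ∧ z.2 % 2 = 1),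
        ((z.1 : ZMod p) * (z.2 : ZMod p))⁻¹
    = ∑ z ∈ (G p).filter (fun z => z.1 % 2 = 1 ∧ z.2 % 2 = 1 ∧ z.1 + z.2 < p),
        ((z.1 : ZMod p) * (z.2 : ZMod p))⁻¹
      + ∑ z ∈ (G p).filter (fun z => z.1 % 2 = 0 ∧ z.2 % 2 = 0 ∧ z.1 + z.2 < p),
        ((z.1 : ZMod p) * (z.2 : ZMod p))⁻¹ := by
  classical
  have h1 := Finset.sum_filter_add_sum_filter_not
    ((G p).filter (fun z => z.1 % 2 = 1 ∧ z.2 % 2 = 1)) (fun z => z.1 + z.2 < p)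
    (fun z => ((z.1 : ZMod p) * (z.2 : ZMod p))⁻¹)
  have e1 : Finset.filter (fun z => z.1 + z.2 < p)
        ((G p).filter (fun z => z.1 % 2 = 1 ∧ z.2 % 2 = 1))
      = (G p).filter (fun z => z.1 % 2 = 1 ∧ z.2 % 2 = 1 ∧ z.1 + z.2 < p) := by
    ext z
    simp only [Finset.mem_filter, G, Finset.mem_product, Finset.mem_Ioo]
    omega
  have e2 : ∑ z ∈ Finset.filter (fun z => ¬ z.1 + z.2 < p)
        ((G p).filter (fun z => z.1 % 2 = 1 ∧ z.2 % 2 = 1)),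
        ((z.1 : ZMod p) * (z.2 : ZMod p))⁻¹
      = ∑ z ∈ (G p).filter (fun z => z.1 % 2 = 0 ∧ z.2 % 2 = 0 ∧ z.1 + z.2 < p),
        ((z.1 : ZMod p) * (z.2 : ZMod p))⁻¹ := by
    refine Finset.sum_nbij' (fun z => (p - z.1, p - z.2)) (fun z => (p - z.1, p - z.2))
      ?_ ?_ ?_ ?_ ?_
    · intro z hz
      simp only [Finset.mem_filter, G, Finset.mem_product, Finset.mem_Ioo] at hz ⊢
      omega
    · intro z hz
      simp only [Finset.mem_filter, G, Finset.mem_product, Finset.mem_Ioo] at hz ⊢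
      omega
    · intro z hz
      simp only [Finset.mem_filter, G, Finset.mem_product, Finset.mem_Ioo] at hz
      show (p - (p - z.1), p - (p - z.2)) = z
      rw [Prod.ext_iff]
      constructor <;> simp <;> omega
    · intro z hz
      simp only [Finset.mem_filter, G, Finset.mem_product, Finset.mem_Ioo] at hz
      show (p - (p - z.1), p - (p - z.2)) = z
      rw [Prod.ext_iff]
      constructor <;> simp <;> omega
    · intro z hz
      simp only [Finset.mem_filter, G, Finset.mem_product, Finset.mem_Ioo] at hz
      show ((z.1 : ZMod p) * (z.2 : ZMod p))⁻¹
        = (((p - z.1 : ℕ) : ZMod p) * ((p - z.2 : ℕ) : ZMod p))⁻¹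
      have h1 : ((p - z.1 : ℕ) : ZMod p) = -(z.1 : ZMod p) := cast_sub p (by omega)
      have h2 : ((p - z.2 : ℕ) : ZMod p) = -(z.2 : ZMod p) := cast_sub p (by omega)
      rw [h1, h2, neg_mul_neg]
  rw [e1, e2] at h1
  exact h1.symm

lemma conv_split (hp : p.Prime) (c : ℕ) :
    ∑ z ∈ (G p).filter (fun z => z.1 % 2 = c ∧ z.2 % 2 = c ∧ z.1 + z.2 < p),
        ((z.1 : ZMod p) * (z.2 : ZMod p))⁻¹
    = 2 * S p c 0 := by
  haveI : Fact p.Prime := ⟨hp⟩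
  have key : ∀ z ∈ (G p).filter (fun z => z.1 % 2 = c ∧ z.2 % 2 = c ∧ z.1 + z.2 < p),
      ((z.1 : ZMod p) * (z.2 : ZMod p))⁻¹
      = ((z.1 : ZMod p) * ((z.1 + z.2 : ℕ) : ZMod p))⁻¹
        + ((z.2 : ZMod p) * ((z.1 + z.2 : ℕ) : ZMod p))⁻¹ := by
    intro z hz
    simp only [Finset.mem_filter, G, Finset.mem_product, Finset.mem_Ioo] at hz
    have hx : (z.1 : ZMod p) ≠ 0 := cast_ne_zero p hp (by omega) (by omega)
    have hy : (z.2 : ZMod p) ≠ 0 := cast_ne_zero p hp (by omega) (by omega)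
    have hxy : ((z.1 + z.2 : ℕ) : ZMod p) ≠ 0 := cast_ne_zero p hp (by omega) (by omega)
    have hcast : ((z.1 + z.2 : ℕ) : ZMod p) = (z.1 : ZMod p) + (z.2 : ZMod p) := by
      push_cast; ring
    rw [hcast] at hxy ⊢
    field_simp
    ring
  rw [Finset.sum_congr rfl key, Finset.sum_add_distrib]
  have b1 : ∑ z ∈ (G p).filter (fun z => z.1 % 2 = c ∧ z.2 % 2 = c ∧ z.1 + z.2 < p),
      ((z.1 : ZMod p) * ((z.1 + z.2 : ℕ) : ZMod p))⁻¹ = S p c 0 := by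
    rw [S]
    refine Finset.sum_nbij' (fun z => (z.1, z.1 + z.2)) (fun w => (w.1, w.2 - w.1))
      ?_ ?_ ?_ ?_ ?_
    · intro z hz
      simp only [Finset.mem_filter, G, Finset.mem_product, Finset.mem_Ioo] at hz ⊢
      omega
    · intro w hw
      simp only [Finset.mem_filter, G, Finset.mem_product, Finset.mem_Ioo] at hw ⊢
      omega
    · intro z hz
      show (z.1, z.1 + z.2 - z.1) = z
      rw [Prod.ext_iff]
      refine ⟨rfl, ?_⟩
      show z.1 + z.2 - z.1 = z.2
      omega
    · intro w hw
      simp only [Finset.mem_filter, G, Finset.mem_product, Finset.mem_Ioo] at hw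
      show (w.1, w.1 + (w.2 - w.1)) = w
      rw [Prod.ext_iff]
      refine ⟨rfl, ?_⟩
      show w.1 + (w.2 - w.1) = w.2
      omega
    · intro z hz
      rfl
  have b2 : ∑ z ∈ (G p).filter (fun z => z.1 % 2 = c ∧ z.2 % 2 = c ∧ z.1 + z.2 < p),
      ((z.2 : ZMod p) * ((z.1 + z.2 : ℕ) : ZMod p))⁻¹ = S p c 0 := by
    rw [S]
    refine Finset.sum_nbij' (fun z => (z.2, z.1 + z.2)) (fun w => (w.2 - w.1, w.1))
      ?_ ?_ ?_ ?_ ?_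
    · intro z hz
      simp only [Finset.mem_filter, G, Finset.mem_product, Finset.mem_Ioo] at hz ⊢
      omega
    · intro w hw
      simp only [Finset.mem_filter, G, Finset.mem_product, Finset.mem_Ioo] at hw ⊢
      omega
    · intro z hz
      show (z.1 + z.2 - z.2, z.2) = z
      rw [Prod.ext_iff]
      constructor
      · show z.1 + z.2 - z.2 = z.1
        omega
      · rfl
    · intro w hw
      simp only [Finset.mem_filter, G, Finset.mem_product, Finset.mem_Ioo] at hw
      show (w.1, w.2 - w.1 + w.1) = w
      rw [Prod.ext_iff]
      refine ⟨rfl, ?_⟩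
      show w.2 - w.1 + w.1 = w.2
      omega
    · intro z hz
      rfl
  rw [b1, b2]
  ring

lemma choose_pm1 (hp : p.Prime) : ∀ j, j < p → (((p - 1).choose j : ℕ) : ZMod p) = (-1) ^ j := by
  haveI : Fact p.Prime := ⟨hp⟩
  intro j
  induction j with
  | zero => intro _; simp
  | succ n ih =>
    intro h
    have hn := ih (by omega)
    have hpas : p.choose (n + 1) = (p - 1).choose n + (p - 1).choose (n + 1) := by
      have h0 : p - 1 + 1 = p := by have := hp.pos; omega
      have := Nat.choose_succ_succ (p - 1) n
      simp only [Nat.succ_eq_add_one] at this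
      rwa [h0] at this
    have hdvd : p ∣ p.choose (n + 1) := hp.dvd_choose_self (by omega) (by omega)
    have hz : ((p.choose (n + 1) : ℕ) : ZMod p) = 0 :=
      (ZMod.natCast_eq_zero_iff _ _).mpr hdvd
    rw [hpas] at hz
    push_cast at hz
    rw [hn] at hz
    have : (((p - 1).choose (n + 1) : ℕ) : ZMod p) = -(-1) ^ n := by
      linear_combination hz
    rw [this, pow_succ]
    ring

lemma B_eq_negA (hp : p.Prime) (hodd : p % 2 = 1) :
    ∑ i ∈ (Finset.Ioo 0 p).filter (fun i => i % 2 = 1), (i : ZMod p)⁻¹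
      = -∑ i ∈ (Finset.Ioo 0 p).filter (fun i => i % 2 = 0), (i : ZMod p)⁻¹ := by
  haveI : Fact p.Prime := ⟨hp⟩
  rw [sum_reflect p hodd (fun i => (i : ZMod p)⁻¹), ← Finset.sum_neg_distrib]
  refine Finset.sum_congr rfl fun i hi => ?_
  simp only [Finset.mem_filter, Finset.mem_Ioo] at hi
  rw [cast_sub p (by omega), inv_neg]

lemma sq_reflect (hp : p.Prime) (hodd : p % 2 = 1) :
    ∑ i ∈ (Finset.Ioo 0 p).filter (fun i => i % 2 = 1), ((i : ZMod p)⁻¹) ^ 2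
      = ∑ i ∈ (Finset.Ioo 0 p).filter (fun i => i % 2 = 0), ((i : ZMod p)⁻¹) ^ 2 := by
  haveI : Fact p.Prime := ⟨hp⟩
  rw [sum_reflect p hodd (fun i => ((i : ZMod p)⁻¹) ^ 2)]
  refine Finset.sum_congr rfl fun i hi => ?_
  simp only [Finset.mem_filter, Finset.mem_Ioo] at hi
  rw [cast_sub p (by omega), inv_neg, neg_sq]

lemma A_eq (hp : p.Prime) (hp3 : 3 < p) :
    ∑ i ∈ (Finset.Ioo 0 p).filter (fun i => i % 2 = 0), (i : ZMod p)⁻¹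
      = -(((2 ^ (p - 1) - 1) / p : ℕ) : ZMod p) := by
  haveI : Fact p.Prime := ⟨hp⟩
  have hodd : p % 2 = 1 := Nat.odd_iff.mp (hp.odd_of_ne_two (by omega))
  have h2ne : (2 : ZMod p) ≠ 0 := by
    have := cast_ne_zero p hp (i := 2) (by omega) (by omega)
    exact_mod_cast this
  have hfl : (2 : ZMod p) ^ (p - 1) = 1 := ZMod.pow_card_sub_one_eq_one h2ne
  have hone : (1 : ℕ) ≤ 2 ^ (p - 1) := Nat.one_le_two_pow
  have hdvd : p ∣ 2 ^ (p - 1) - 1 := by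
    rw [← ZMod.natCast_eq_zero_iff, Nat.cast_sub hone]
    push_cast
    rw [hfl]
    ring
  have hqp : (2 ^ (p - 1) - 1) / p * p = 2 ^ (p - 1) - 1 := Nat.div_mul_cancel hdvd
  have hm : ∀ k ∈ (Finset.Ioo 0 p), p * (p.choose k / p) = p.choose k := by
    intro k hk
    simp only [Finset.mem_Ioo] at hk
    exact Nat.mul_div_cancel' (hp.dvd_choose_self (by omega) (by omega))
  have hsum_choose : ∑ k ∈ Finset.Ioo 0 p, p.choose k = 2 ^ p - 2 := by
    have h := Nat.sum_range_choose p
    have hins : Finset.range (p + 1) = insert 0 (insert p (Finset.Ioo 0 p)) := by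
      ext x
      simp only [Finset.mem_range, Finset.mem_insert, Finset.mem_Ioo]
      omega
    rw [hins, Finset.sum_insert (by simp [Finset.mem_insert, Finset.mem_Ioo]; omega),
      Finset.sum_insert (by simp [Finset.mem_Ioo])] at h
    simp only [Nat.choose_zero_right, Nat.choose_self] at h
    have hp2 : 2 ≤ 2 ^ p := by
      calc 2 = 2 ^ 1 := (pow_one 2).symm
      _ ≤ 2 ^ p := Nat.pow_le_pow_right (by omega) (by omega)
    omega
  have hsum_c : ∑ k ∈ Finset.Ioo 0 p, p.choose k / p = 2 * ((2 ^ (p - 1) - 1) / p) := by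
    apply Nat.eq_of_mul_eq_mul_left hp.pos
    rw [Finset.mul_sum, Finset.sum_congr rfl hm, hsum_choose]
    have hpow : 2 ^ p = 2 * 2 ^ (p - 1) := by
      have h' : p - 1 + 1 = p := by omega
      conv_lhs => rw [← h']
      rw [pow_succ]
      ring
    calc 2 ^ p - 2 = 2 * (2 ^ (p - 1) - 1) := by omega
    _ = 2 * ((2 ^ (p - 1) - 1) / p * p) := by rw [hqp]
    _ = p * (2 * ((2 ^ (p - 1) - 1) / p)) := by ring
  have hck : ∀ k ∈ Finset.Ioo 0 p,
      ((p.choose k / p : ℕ) : ZMod p) = (-1) ^ (k - 1) * (k : ZMod p)⁻¹ := by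
    intro k hk
    have hk' := hk
    simp only [Finset.mem_Ioo] at hk'
    have h1 : p * (p - 1).choose (k - 1) = p.choose k * k := by
      have := Nat.add_one_mul_choose_eq (p - 1) (k - 1)
      have e1 : p - 1 + 1 = p := by omega
      have e2 : k - 1 + 1 = k := by omega
      rwa [e1, e2] at this
    have h2 : p * (p - 1).choose (k - 1) = p * (p.choose k / p * k) := by
      rw [h1]
      conv_lhs => rw [← hm k hk]
      ring
    have hkc : (p - 1).choose (k - 1) = p.choose k / p * k :=
      Nat.eq_of_mul_eq_mul_left hp.pos h2
    have hcast : (((p - 1).choose (k - 1) : ℕ) : ZMod p) = (-1) ^ (k - 1) :=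
      choose_pm1 p hp (k - 1) (by omega)
    have hkne : (k : ZMod p) ≠ 0 := cast_ne_zero p hp (by omega) (by omega)
    have hfin : ((p.choose k / p : ℕ) : ZMod p) * (k : ZMod p) = (-1) ^ (k - 1) := by
      rw [← hcast, hkc]
      push_cast
      ring
    rw [← hfin, mul_assoc, mul_inv_cancel₀ hkne, mul_one]
  have main : ((2 * ((2 ^ (p - 1) - 1) / p) : ℕ) : ZMod p)
      = ∑ k ∈ Finset.Ioo 0 p, (-1) ^ (k - 1) * (k : ZMod p)⁻¹ := by
    rw [← hsum_c, Nat.cast_sum]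
    exact Finset.sum_congr rfl hck
  have hsplit := Finset.sum_filter_add_sum_filter_not (Finset.Ioo 0 p)
    (fun i => i % 2 = 0) (fun k => (-1 : ZMod p) ^ (k - 1) * (k : ZMod p)⁻¹)
  have efil : (Finset.Ioo 0 p).filter (fun i => ¬ i % 2 = 0)
      = (Finset.Ioo 0 p).filter (fun i => i % 2 = 1) := by
    apply Finset.filter_congr
    intro x _
    omega
  rw [efil] at hsplit
  have hev : ∑ k ∈ (Finset.Ioo 0 p).filter (fun i => i % 2 = 0),
      (-1 : ZMod p) ^ (k - 1) * (k : ZMod p)⁻¹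
      = -∑ k ∈ (Finset.Ioo 0 p).filter (fun i => i % 2 = 0), (k : ZMod p)⁻¹ := by
    rw [← Finset.sum_neg_distrib]
    refine Finset.sum_congr rfl fun k hk => ?_
    simp only [Finset.mem_filter, Finset.mem_Ioo] at hk
    have : Odd (k - 1) := by
      rw [Nat.odd_iff]
      omega
    rw [this.neg_one_pow]
    ring
  have hod : ∑ k ∈ (Finset.Ioo 0 p).filter (fun i => i % 2 = 1),
      (-1 : ZMod p) ^ (k - 1) * (k : ZMod p)⁻¹
      = ∑ k ∈ (Finset.Ioo 0 p).filter (fun i => i % 2 = 1), (k : ZMod p)⁻¹ := by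
    refine Finset.sum_congr rfl fun k hk => ?_
    simp only [Finset.mem_filter, Finset.mem_Ioo] at hk
    have : Even (k - 1) := by
      rw [Nat.even_iff]
      omega
    rw [this.neg_one_pow]
    ring
  rw [hev, hod, B_eq_negA p hp hodd] at hsplit
  push_cast at main
  rw [← hsplit] at main
  -- main : 2 * q = -A + -A
  have h2q : (2 : ZMod p) * (((2 ^ (p - 1) - 1) / p : ℕ) : ZMod p)
      = (2 : ZMod p) * (-∑ i ∈ (Finset.Ioo 0 p).filter (fun i => i % 2 = 0), (i : ZMod p)⁻¹) := by
    rw [main]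
    ring
  have := mul_left_cancel₀ h2ne h2q
  rw [this]
  ring

lemma two_ne (hp : p.Prime) (hp3 : 3 < p) : (2 : ZMod p) ≠ 0 := by
  have := cast_ne_zero p hp (i := 2) (by omega) (by omega)
  exact_mod_cast this

lemma C_zero (hp : p.Prime) (hp3 : 3 < p) :
    ∑ i ∈ (Finset.Ioo 0 p).filter (fun i => i % 2 = 0), ((i : ZMod p)⁻¹) ^ 2 = 0 := by
  haveI : Fact p.Prime := ⟨hp⟩
  have hodd : p % 2 = 1 := Nat.odd_iff.mp (hp.odd_of_ne_two (by omega))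
  have htot := sum_inv_sq_zero p hp hp3
  have hsplit := Finset.sum_filter_add_sum_filter_not (Finset.Ioo 0 p)
    (fun i => i % 2 = 0) (fun i => ((i : ZMod p)⁻¹) ^ 2)
  have efil : (Finset.Ioo 0 p).filter (fun i => ¬ i % 2 = 0)
      = (Finset.Ioo 0 p).filter (fun i => i % 2 = 1) := by
    apply Finset.filter_congr
    intro x _
    omega
  rw [efil, sq_reflect p hp hodd, htot] at hsplit
  have h2 : (2 : ZMod p) * ∑ i ∈ (Finset.Ioo 0 p).filter (fun i => i % 2 = 0),
      ((i : ZMod p)⁻¹) ^ 2 = (2 : ZMod p) * 0 := by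
    rw [mul_zero, ← hsplit]
    ring
  exact mul_left_cancel₀ (two_ne p hp hp3) h2

lemma main_facts (hp : p.Prime) (hp3 : 3 < p) :
    S p 0 1 = -(2 * S p 0 0) ∧ 2 * S p 0 0 = (((2 ^ (p - 1) - 1) / p : ℕ) : ZMod p) ^ 2 := by
  haveI : Fact p.Prime := ⟨hp⟩
  have hodd : p % 2 = 1 := Nat.odd_iff.mp (hp.odd_of_ne_two (by omega))
  set A := ∑ i ∈ (Finset.Ioo 0 p).filter (fun i => i % 2 = 0), (i : ZMod p)⁻¹ with hA
  set B := ∑ i ∈ (Finset.Ioo 0 p).filter (fun i => i % 2 = 1), (i : ZMod p)⁻¹ with hB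
  have hBA : B = -A := B_eq_negA p hp hodd
  have hAq : A = -(((2 ^ (p - 1) - 1) / p : ℕ) : ZMod p) := A_eq p hp hp3
  -- A * A = 2 * S 0 0
  have hdiag00 : ∑ i ∈ (Finset.Ioo 0 p).filter (fun i => i % 2 = 0 ∧ i % 2 = 0),
      ((i : ZMod p) * (i : ZMod p))⁻¹ = 0 := by
    have e : (Finset.Ioo 0 p).filter (fun i => i % 2 = 0 ∧ i % 2 = 0)
        = (Finset.Ioo 0 p).filter (fun i => i % 2 = 0) := by
      apply Finset.filter_congr
      intro x _
      tauto
    rw [e, ← C_zero p hp hp3]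
    refine Finset.sum_congr rfl fun i _ => ?_
    rw [mul_inv, sq]
  have hAA : A * A = 2 * S p 0 0 := by
    rw [hA, mul_eq_pairs p hp 0 0, pairs_split p 0 0, hdiag00]
    ring
  -- A * B = S 0 1 + S 1 0
  have hdiag01 : ∑ i ∈ (Finset.Ioo 0 p).filter (fun i => i % 2 = 0 ∧ i % 2 = 1),
      ((i : ZMod p) * (i : ZMod p))⁻¹ = 0 := by
    apply Finset.sum_eq_zero
    intro i hi
    simp only [Finset.mem_filter] at hi
    omega
  have hAB : A * B = S p 0 1 + S p 1 0 := by
    rw [hA, hB, mul_eq_pairs p hp 0 1, pairs_split p 0 1, hdiag01]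
    ring
  -- B * B = 2 * S 1 0 + 2 * S 0 0
  have hBB : B * B = 2 * S p 1 0 + 2 * S p 0 0 := by
    rw [hB, mul_eq_pairs p hp 1 1, odd_pairs_split p hodd,
      conv_split p hp 1, conv_split p hp 0]
  -- deduce S 1 0 = 0
  have hBB' : B * B = A * A := by
    rw [hBA]
    ring
  have hS10 : S p 1 0 = 0 := by
    have h2 : (2 : ZMod p) * S p 1 0 = (2 : ZMod p) * 0 := by
      rw [mul_zero]
      have : 2 * S p 1 0 + 2 * S p 0 0 = 2 * S p 0 0 := by
        rw [← hBB, hBB', hAA]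
      linear_combination this
    exact mul_left_cancel₀ (two_ne p hp hp3) h2
  have hS01 : S p 0 1 = -(A * A) := by
    have := hAB
    rw [hS10, hBA] at this
    linear_combination -this
  constructor
  · rw [hS01, hAA]
  · rw [← hAA, hAq]
    ring

end S01aux

theorem S01_value (p : ℕ) (hp : p.Prime) (hp3 : 3 < p) :
    ((∑ i ∈ (Finset.Ioo 0 p).filter (fun i => Even i),
        ∑ j ∈ (Finset.Ioo i p).filter (fun j => Odd j),
          ((i : ZMod p) * (j : ZMod p))⁻¹)
      = -(2 * (∑ i ∈ (Finset.Ioo 0 p).filter (fun i => Even i),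
          ∑ j ∈ (Finset.Ioo i p).filter (fun j => Even j),
            ((i : ZMod p) * (j : ZMod p))⁻¹))) ∧
    (-(2 * (∑ i ∈ (Finset.Ioo 0 p).filter (fun i => Even i),
          ∑ j ∈ (Finset.Ioo i p).filter (fun j => Even j),
            ((i : ZMod p) * (j : ZMod p))⁻¹))
      = -(((2 ^ (p - 1) - 1) / p : ℕ) : ZMod p) ^ 2) := by
  have eE : (Finset.Ioo 0 p).filter (fun i => Even i)
      = (Finset.Ioo 0 p).filter (fun i => i % 2 = 0) := by
    apply Finset.filter_congr
    intro x _
    simpa using Nat.even_iff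
  have eEi : ∀ i : ℕ, (Finset.Ioo i p).filter (fun j => Even j)
      = (Finset.Ioo i p).filter (fun j => j % 2 = 0) := by
    intro i
    apply Finset.filter_congr
    intro x _
    simpa using Nat.even_iff
  have eOi : ∀ i : ℕ, (Finset.Ioo i p).filter (fun j => Odd j)
      = (Finset.Ioo i p).filter (fun j => j % 2 = 1) := by
    intro i
    apply Finset.filter_congr
    intro x _
    simpa using Nat.odd_iff
  have h01 : (∑ i ∈ (Finset.Ioo 0 p).filter (fun i => Even i),
      ∑ j ∈ (Finset.Ioo i p).filter (fun j => Odd j),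
        ((i : ZMod p) * (j : ZMod p))⁻¹) = S01aux.S p 0 1 := by
    rw [eE]
    rw [Finset.sum_congr rfl (fun i _ => by rw [eOi i])]
    exact S01aux.nested_to_pairs p 0 1 (fun i j => ((i : ZMod p) * (j : ZMod p))⁻¹)
  have h00 : (∑ i ∈ (Finset.Ioo 0 p).filter (fun i => Even i),
      ∑ j ∈ (Finset.Ioo i p).filter (fun j => Even j),
        ((i : ZMod p) * (j : ZMod p))⁻¹) = S01aux.S p 0 0 := by
    rw [eE]
    rw [Finset.sum_congr rfl (fun i _ => by rw [eEi i])]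
    exact S01aux.nested_to_pairs p 0 0 (fun i j => ((i : ZMod p) * (j : ZMod p))⁻¹)
  obtain ⟨m1, m2⟩ := S01aux.main_facts p hp hp3
  rw [h01, h00]
  exact ⟨by rw [m1], by rw [m2]⟩
end
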